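/- arXiv:1607.08455 — 11 statements merged into one kernel-verified Lean document; each statement's English description precedes it below -/
import Mathlib

section
/- Let k and i be positive integers with gcd(i,k) = 1, and let F = GaloisField 2 k. For any c1, c2, c3 ∈ F, not all zero, the number of x ∈ F satisfying c1·x^(2^(2i)) + c2·x^(2^i) + c3·x = 0 is at most 4. -/
/-!
Write `σ x = x ^ 2 ^ i`; since `gcd(i, k) = 1`, its fixed field is `𝔽₂`. For a nonzero root `x₀` of
`L = c₁σ² + c₂σ + c₃`, the operator `t ↦ L (x₀ t)` factors as `(A σ - C) ∘ (σ - 1)` with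
`A = c₁ σ²(x₀)` and `C = c₃ x₀`. Two nonzero roots of a σ-binomial differ by a σ-fixed factor, so
each factor has at most `|Fix σ| = 2` roots, and the additive group `ker L` has at most `2 · 2`
elements.
-/

open Function

section SigmaPolynomial

variable {F : Type*} [Field F] (σ : F →+* F)

def sigmaBinomial (a b : F) : F →+ F :=
  AddMonoidHom.mk' (fun x => a * σ x + b * x) fun x y => by simp only [map_add]; ring

def sigmaTrinomial (a b c : F) : F →+ F :=
  AddMonoidHom.mk' (fun x => a * σ (σ x) + b * σ x + c * x) fun x y => by simp only [map_add]; ring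

@[simp]
theorem sigmaBinomial_apply (a b x : F) : sigmaBinomial σ a b x = a * σ x + b * x := rfl

@[simp]
theorem sigmaTrinomial_apply (a b c x : F) :
    sigmaTrinomial σ a b c x = a * σ (σ x) + b * σ x + c * x := rfl

theorem sigmaTrinomial_zero_left (b c : F) : sigmaTrinomial σ 0 b c = sigmaBinomial σ b c := by
  ext x; simp

theorem mem_ker_sigmaBinomial_one_neg_one {t : F} :
    t ∈ (sigmaBinomial σ 1 (-1)).ker ↔ t ∈ fixedPoints σ := by
  simp [AddMonoidHom.mem_ker, IsFixedPt, add_neg_eq_zero]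

theorem mul_inv_mem_fixedPoints_of_mem_ker_sigmaBinomial {a b x s : F} (hab : ¬(a = 0 ∧ b = 0))
    (hx : x ∈ (sigmaBinomial σ a b).ker) (hs : s ∈ (sigmaBinomial σ a b).ker) (hs0 : s ≠ 0) :
    x * s⁻¹ ∈ fixedPoints σ := by
  rw [AddMonoidHom.mem_ker, sigmaBinomial_apply] at hx hs
  have ha : a ≠ 0 := by
    rintro rfl
    exact hab ⟨rfl, by simpa [hs0] using hs⟩
  have hσs : σ s ≠ 0 := map_ne_zero σ |>.mpr hs0
  rw [mem_fixedPoints, IsFixedPt, map_mul, map_inv₀, ← div_eq_mul_inv, ← div_eq_mul_inv,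
    div_eq_div_iff hσs hs0]
  exact mul_left_cancel₀ ha (by linear_combination s * hx - x * hs)

theorem one_le_card_fixedPoints [Finite F] : 1 ≤ Nat.card (fixedPoints σ) :=
  have : Nonempty (fixedPoints σ) := ⟨⟨0, map_zero σ⟩⟩
  Nat.card_pos

theorem card_ker_sigmaBinomial_le [Finite F] {a b : F} (hab : ¬(a = 0 ∧ b = 0)) :
    Nat.card (sigmaBinomial σ a b).ker ≤ Nat.card (fixedPoints σ) := by
  obtain hbot | ⟨s, hs, hs0⟩ := (sigmaBinomial σ a b).ker.bot_or_exists_ne_zero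
  · rw [hbot, AddSubgroup.card_bot]
    exact one_le_card_fixedPoints σ
  · refine Nat.card_le_card_of_injective
      (fun x => ⟨x * s⁻¹, mul_inv_mem_fixedPoints_of_mem_ker_sigmaBinomial σ hab x.2 hs hs0⟩) ?_
    intro x y hxy
    exact Subtype.ext (mul_left_injective₀ (inv_ne_zero hs0) (congrArg Subtype.val hxy))

theorem sigmaBinomial_comp_sigmaBinomial_one_neg_one {a b c x₀ : F}
    (hx₀ : x₀ ∈ (sigmaTrinomial σ a b c).ker) :
    (sigmaBinomial σ (a * σ (σ x₀)) (-(c * x₀))).comp (sigmaBinomial σ 1 (-1)) =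
      (sigmaTrinomial σ a b c).comp (AddMonoidHom.mulLeft x₀) := by
  rw [AddMonoidHom.mem_ker, sigmaTrinomial_apply] at hx₀
  ext t
  simp only [AddMonoidHom.comp_apply, sigmaBinomial_apply, sigmaTrinomial_apply,
    AddMonoidHom.coe_mulLeft, map_add, map_mul, map_neg, map_one]
  linear_combination (-σ t) * hx₀

theorem card_ker_sigmaTrinomial_le_of_ne_zero [Finite F] {a b c : F} (ha : a ≠ 0) :
    Nat.card (sigmaTrinomial σ a b c).ker ≤ Nat.card (fixedPoints σ) ^ 2 := by
  set L := sigmaTrinomial σ a b c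
  obtain hbot | ⟨x₀, hx₀, hx₀0⟩ := L.ker.bot_or_exists_ne_zero
  · rw [hbot, AddSubgroup.card_bot]
    exact Nat.one_le_pow _ _ (one_le_card_fixedPoints σ)
  set B := sigmaBinomial σ (a * σ (σ x₀)) (-(c * x₀))
  let ψ : L.ker →+ F :=
    (sigmaBinomial σ 1 (-1)).comp ((AddMonoidHom.mulLeft x₀⁻¹).comp L.ker.subtype)
  have hrange : ψ.range ≤ B.ker := by
    rintro _ ⟨x, rfl⟩
    change B.comp (sigmaBinomial σ 1 (-1)) (x₀⁻¹ * x) = 0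
    rw [sigmaBinomial_comp_sigmaBinomial_one_neg_one σ hx₀, AddMonoidHom.comp_apply,
      AddMonoidHom.coe_mulLeft, mul_inv_cancel_left₀ hx₀0]
    exact x.2
  have hker : Nat.card ψ.ker ≤ Nat.card (fixedPoints σ) := by
    refine Nat.card_le_card_of_injective
      (fun y => ⟨x₀⁻¹ * y.1.1, (mem_ker_sigmaBinomial_one_neg_one σ).mp y.2⟩) ?_
    intro y z hyz
    exact Subtype.ext (Subtype.ext (mul_right_injective₀ (inv_ne_zero hx₀0)
      (congrArg Subtype.val hyz)))
  have hB : Nat.card B.ker ≤ Nat.card (fixedPoints σ) :=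
    card_ker_sigmaBinomial_le σ fun h => mul_ne_zero ha (map_ne_zero σ |>.mpr
      (map_ne_zero σ |>.mpr hx₀0)) h.1
  calc Nat.card L.ker = Nat.card ψ.ker * Nat.card ψ.range := by
        rw [← AddSubgroup.index_ker ψ, AddSubgroup.card_mul_index]
    _ ≤ Nat.card (fixedPoints σ) * Nat.card (fixedPoints σ) :=
        Nat.mul_le_mul hker ((AddSubgroup.card_le_of_le hrange).trans hB)
    _ = Nat.card (fixedPoints σ) ^ 2 := (sq _).symm

theorem card_ker_sigmaTrinomial_le [Finite F] {a b c : F} (habc : ¬(a = 0 ∧ b = 0 ∧ c = 0)) :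
    Nat.card (sigmaTrinomial σ a b c).ker ≤ Nat.card (fixedPoints σ) ^ 2 := by
  obtain rfl | ha := eq_or_ne a 0
  · rw [sigmaTrinomial_zero_left]
    exact (card_ker_sigmaBinomial_le σ (by tauto)).trans (Nat.le_self_pow two_ne_zero _)
  · exact card_ker_sigmaTrinomial_le_of_ne_zero σ ha

end SigmaPolynomial

theorem GaloisField.isPeriodicPt_frobenius (p : ℕ) [Fact p.Prime] (n : ℕ) (x : GaloisField p n) :
    IsPeriodicPt (frobenius (GaloisField p n) p) n x := by
  obtain rfl | hn := eq_or_ne n 0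
  · exact isPeriodicPt_zero _ _
  · have := Fintype.ofFinite (GaloisField p n)
    have hx := FiniteField.pow_card x
    rwa [← Nat.card_eq_fintype_card, GaloisField.card p n hn, ← iterate_frobenius] at hx

theorem GaloisField.pow_eq_self_of_iterateFrobenius_eq_self {p n i : ℕ} [Fact p.Prime]
    (hi : Nat.gcd i n = 1) {x : GaloisField p n}
    (hx : iterateFrobenius (GaloisField p n) p i x = x) : x ^ p = x := by
  have hi' : IsPeriodicPt (frobenius (GaloisField p n) p) i x := by
    rwa [IsPeriodicPt, IsFixedPt, ← coe_iterateFrobenius]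
  have h := hi'.gcd (GaloisField.isPeriodicPt_frobenius p n x)
  rwa [hi, IsPeriodicPt, IsFixedPt, iterate_one, frobenius_def] at h

theorem GaloisField.card_fixedPoints_iterateFrobenius_two_le {n i : ℕ} (hi : Nat.gcd i n = 1) :
    Nat.card (fixedPoints (iterateFrobenius (GaloisField 2 n) 2 i)) ≤ 2 := by
  have hsub : fixedPoints (iterateFrobenius (GaloisField 2 n) 2 i) ⊆ {0, 1} := fun x hx => by
    have hx2 := GaloisField.pow_eq_self_of_iterateFrobenius_eq_self hi hx
    rw [sq] at hx2
    simpa using (IsIdempotentElem.iff_eq_zero_or_one.mp hx2)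
  rw [Nat.card_coe_set_eq]
  exact (Set.ncard_le_ncard hsub).trans (Set.ncard_pair zero_ne_one).le

theorem linearized_trinomial_at_most_four_solutions_general (k i : ℕ) (hgcd : Nat.gcd i k = 1)
    (c1 c2 c3 : GaloisField 2 k) (hc : ¬(c1 = 0 ∧ c2 = 0 ∧ c3 = 0)) :
    Set.ncard {x : GaloisField 2 k |
      c1 * x ^ 2 ^ (2 * i) + c2 * x ^ 2 ^ i + c3 * x = 0} ≤ 4 := by
  set σ := iterateFrobenius (GaloisField 2 k) 2 i
  have hset : {x : GaloisField 2 k | c1 * x ^ 2 ^ (2 * i) + c2 * x ^ 2 ^ i + c3 * x = 0} =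
      (sigmaTrinomial σ c1 c2 c3).ker := by
    ext x
    simp [σ, iterateFrobenius_def, ← pow_mul, ← pow_add, two_mul]
  rw [hset, ← Nat.card_coe_set_eq]
  calc Nat.card (sigmaTrinomial σ c1 c2 c3).ker ≤ Nat.card (fixedPoints σ) ^ 2 :=
        card_ker_sigmaTrinomial_le σ hc
    _ ≤ 2 ^ 2 :=
        Nat.pow_le_pow_left (GaloisField.card_fixedPoints_iterateFrobenius_two_le hgcd) 2

/-- Corollary 2.3: for `gcd(i,k) = 1` and `c1, c2, c3 ∈ GaloisField 2 k` not all zero,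
the equation `c1·x^(2^(2i)) + c2·x^(2^i) + c3·x = 0` has at most 4 solutions. -/
theorem linearized_trinomial_at_most_four_solutions (k i : ℕ) (hkpos : 0 < k)
    (hipos : 0 < i) (hgcd : Nat.gcd i k = 1)
    (c1 c2 c3 : GaloisField 2 k) (hc : ¬(c1 = 0 ∧ c2 = 0 ∧ c3 = 0)) :
    Set.ncard {x : GaloisField 2 k |
      c1 * x ^ 2 ^ (2 * i) + c2 * x ^ 2 ^ i + c3 * x = 0} ≤ 4 :=
  linearized_trinomial_at_most_four_solutions_general k i hgcd c1 c2 c3 hc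
end

section
/- Let k be an odd positive integer and i a positive integer with gcd(i,k) = 1, and let F = GaloisField 2 k. For any c1, c2, c3 ∈ F, not all zero, the number of x ∈ F satisfying c1·x^(2^(4i)) + c2·x^(2^(2i)) + c3·x = 0 is at most 4. -/
/-!
The solution set is the kernel of the additive map `L = c₁σ² + c₂σ + c₃` with
`σ x = x ^ 2 ^ (2 * i)`, and the fixed points of `σ` are only `0` and `1`, because `σ` and the
Frobenius `x ↦ x ^ 2 ^ k` together generate `x ↦ x ^ 2`. A first-order equation
`a σ x + b x = 0` then has at most one nonzero solution `x`: for another solution `y`,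
`y / x` is fixed by `σ`. For a nonzero solution `x₀` of the second-order equation,
`x ↦ σ (x / x₀) - x / x₀` is additive, maps solutions to solutions of a first-order
equation and has kernel `{0, x₀}`, so there are at most `2 · 2` solutions.
-/

theorem pow_pow_gcd_eq_self {M : Type*} [Monoid M] {x : M} {p m n : ℕ}
    (hm : x ^ p ^ m = x) (hn : x ^ p ^ n = x) : x ^ p ^ m.gcd n = x := by
  have key : ∀ l, Function.IsPeriodicPt (· ^ p) l x ↔ x ^ p ^ l = x := fun l => by
    rw [Function.IsPeriodicPt, Function.IsFixedPt, pow_iterate]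
  exact (key _).1 (((key m).2 hm).gcd ((key n).2 hn))

namespace GaloisField

theorem pow_pow_eq_self {p : ℕ} [Fact p.Prime] {k : ℕ} (hk : k ≠ 0) (x : GaloisField p k) :
    x ^ p ^ k = x := by
  have : Fintype (GaloisField p k) := Fintype.ofFinite _
  rw [← GaloisField.card p k hk, Nat.card_eq_fintype_card]
  exact FiniteField.pow_card x

theorem eq_zero_or_one_of_pow_pow_eq_self {k n : ℕ} (hk : k ≠ 0) (hn : n.Coprime k)
    {x : GaloisField 2 k} (hx : x ^ 2 ^ n = x) : x = 0 ∨ x = 1 := by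
  have hx2 : x ^ 2 ^ n.gcd k = x := pow_pow_gcd_eq_self hx (pow_pow_eq_self hk x)
  rw [hn, pow_one, sq] at hx2
  exact IsIdempotentElem.iff_eq_zero_or_one.1 hx2

end GaloisField

namespace RingHom

variable {K : Type*} [Field K] (σ : K →+* K)

theorem eq_zero_or_eq_of_map_div_eq_self (hσ : ∀ u, σ u = u → u = 0 ∨ u = 1) {x x₀ : K}
    (hx₀ : x₀ ≠ 0) (h : σ (x / x₀) = x / x₀) : x = 0 ∨ x = x₀ := by
  simpa [div_eq_zero_iff, hx₀, div_eq_one_iff_eq hx₀] using hσ _ h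

theorem eq_zero_or_eq_of_first_order_eq_zero (hσ : ∀ u, σ u = u → u = 0 ∨ u = 1) {a b x y : K}
    (hab : ¬(a = 0 ∧ b = 0)) (hx : a * σ x + b * x = 0) (hy : a * σ y + b * y = 0)
    (hx0 : x ≠ 0) : y = 0 ∨ y = x := by
  rcases eq_or_ne a 0 with rfl | ha
  · have hb : b ≠ 0 := fun hb => hab ⟨rfl, hb⟩
    simp_all
  have hσx : σ x ≠ 0 := (map_ne_zero σ).2 hx0
  have cross : σ y * x = σ x * y :=
    mul_left_cancel₀ ha (by linear_combination x * hy - y * hx)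
  refine σ.eq_zero_or_eq_of_map_div_eq_self hσ hx0 ?_
  rw [map_div₀, div_eq_div_iff hσx hx0]
  linear_combination cross

theorem first_order_eq_zero_of_second_order_eq_zero {c₁ c₂ c₃ x₀ x : K} (hx₀ : x₀ ≠ 0)
    (h₀ : c₁ * σ (σ x₀) + c₂ * σ x₀ + c₃ * x₀ = 0) (h : c₁ * σ (σ x) + c₂ * σ x + c₃ * x = 0) :
    c₁ * σ (σ x₀) * σ (σ (x / x₀) - x / x₀) +
      (c₁ * σ (σ x₀) + c₂ * σ x₀) * (σ (x / x₀) - x / x₀) = 0 := by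
  set u := x / x₀
  have hx : x = x₀ * u := by simp [u, mul_div_cancel₀ _ hx₀]
  rw [hx, map_mul, map_mul] at h
  rw [map_sub]
  linear_combination h - u * h₀

theorem exists_second_order_solutions_subset (hσ : ∀ u, σ u = u → u = 0 ∨ u = 1) {c₁ c₂ c₃ : K}
    (hc : ¬(c₁ = 0 ∧ c₂ = 0 ∧ c₃ = 0)) :
    ∃ x₀ y₀ : K, {x | c₁ * σ (σ x) + c₂ * σ x + c₃ * x = 0} ⊆ {0, x₀, y₀, y₀ + x₀} := by
  set S := {x | c₁ * σ (σ x) + c₂ * σ x + c₃ * x = 0}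
  by_cases hS : S ⊆ {0}
  · exact ⟨0, 0, hS.trans (by simp)⟩
  obtain ⟨x₀, hx₀S, hx₀ : x₀ ≠ 0⟩ := Set.not_subset.1 hS
  set w := fun x => σ (x / x₀) - x / x₀
  have hw : ∀ x ∈ S, c₁ * σ (σ x₀) * σ (w x) + (c₁ * σ (σ x₀) + c₂ * σ x₀) * w x = 0 :=
    fun x hx => σ.first_order_eq_zero_of_second_order_eq_zero hx₀ hx₀S hx
  have hd : ¬(c₁ * σ (σ x₀) = 0 ∧ c₁ * σ (σ x₀) + c₂ * σ x₀ = 0) := by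
    rintro ⟨h₁, h₂⟩
    have hσx₀ : σ x₀ ≠ 0 := (map_ne_zero σ).2 hx₀
    have hc₁ : c₁ = 0 := by simpa [hσx₀] using h₁
    have hc₂ : c₂ = 0 := by simpa [hc₁, hσx₀] using h₂
    have hc₃ : c₃ = 0 := by simpa [S, hc₁, hc₂, hx₀] using hx₀S
    exact hc ⟨hc₁, hc₂, hc₃⟩
  have hker : ∀ x, w x = 0 → x = 0 ∨ x = x₀ := fun x hx =>
    σ.eq_zero_or_eq_of_map_div_eq_self hσ hx₀ (sub_eq_zero.1 hx)
  by_cases hw0 : ∀ y ∈ S, w y = 0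
  · exact ⟨x₀, 0, fun y hy => by simpa using hker y (hw0 y hy)⟩
  push Not at hw0
  obtain ⟨y₀, hy₀S, hy₀⟩ := hw0
  refine ⟨x₀, y₀, fun x hx => ?_⟩
  rcases σ.eq_zero_or_eq_of_first_order_eq_zero hσ hd (hw y₀ hy₀S) (hw x hx) hy₀ with h | h
  · rcases hker x h with rfl | rfl <;> simp
  · have : w (x - y₀) = 0 := by
      simp only [w, sub_div, map_sub] at h ⊢
      linear_combination h
    rcases hker _ this with h' | h'
    · simp [sub_eq_zero.1 h']
    · simp [eq_add_of_sub_eq' h']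

theorem ncard_second_order_solutions_le_four (hσ : ∀ u, σ u = u → u = 0 ∨ u = 1) {c₁ c₂ c₃ : K}
    (hc : ¬(c₁ = 0 ∧ c₂ = 0 ∧ c₃ = 0)) :
    {x | c₁ * σ (σ x) + c₂ * σ x + c₃ * x = 0}.ncard ≤ 4 := by
  classical
  obtain ⟨x₀, y₀, hS⟩ := σ.exists_second_order_solutions_subset hσ hc
  refine (Set.ncard_le_ncard hS).trans ?_
  rw [show ({0, x₀, y₀, y₀ + x₀} : Set K) = ↑({0, x₀, y₀, y₀ + x₀} : Finset K) by simp,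
    Set.ncard_coe_finset]
  exact Finset.card_le_four

end RingHom

theorem linearized_trinomial_double_step_at_most_four_solutions_general (k i : ℕ) (hk : Odd k)
    (hgcd : Nat.gcd i k = 1)
    (c1 c2 c3 : GaloisField 2 k) (hc : ¬(c1 = 0 ∧ c2 = 0 ∧ c3 = 0)) :
    Set.ncard {x : GaloisField 2 k |
      c1 * x ^ 2 ^ (4 * i) + c2 * x ^ 2 ^ (2 * i) + c3 * x = 0} ≤ 4 := by
  set σ := iterateFrobenius (GaloisField 2 k) 2 (2 * i)
  have hσ : ∀ x, σ x = x → x = 0 ∨ x = 1 := fun _ hx =>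
    GaloisField.eq_zero_or_one_of_pow_pow_eq_self hk.pos.ne'
      (Nat.Coprime.mul_left hk.coprime_two_left hgcd) hx
  have hσ₁ : ∀ x, σ x = x ^ 2 ^ (2 * i) := fun x => iterateFrobenius_def _ _ x
  have hσ₂ : ∀ x, σ (σ x) = x ^ 2 ^ (4 * i) := fun x => by
    rw [hσ₁, hσ₁, ← pow_mul, ← pow_add]
    ring_nf
  simp_rw [← hσ₂, ← hσ₁]
  exact σ.ncard_second_order_solutions_le_four hσ hc

/-- Corollary 2.4: for `k` odd, `gcd(i,k) = 1` and `c1, c2, c3 ∈ GaloisField 2 k` not all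
zero, the equation `c1·x^(2^(4i)) + c2·x^(2^(2i)) + c3·x = 0` has at most 4 solutions. -/
theorem linearized_trinomial_double_step_at_most_four_solutions (k i : ℕ) (hk : Odd k)
    (hkpos : 0 < k) (hipos : 0 < i) (hgcd : Nat.gcd i k = 1)
    (c1 c2 c3 : GaloisField 2 k) (hc : ¬(c1 = 0 ∧ c2 = 0 ∧ c3 = 0)) :
    Set.ncard {x : GaloisField 2 k |
      c1 * x ^ 2 ^ (4 * i) + c2 * x ^ 2 ^ (2 * i) + c3 * x = 0} ≤ 4 :=
  linearized_trinomial_double_step_at_most_four_solutions_general k i hk hgcd c1 c2 c3 hc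
end

section
/- Let k be an odd positive integer, i a positive integer with gcd(i,k) = 1, F = GaloisField 2 k, and α ∈ F with α ≠ 0 and α ≠ 1. For u, v ∈ F, the following three equations hold simultaneously: (1) (αv+u)·(α·(αu+v)^(2^i) + u^(2^i)) + (αv+u)^(2^i)·(α^(2^i)·(αu+v) + u) = 0; (2) (αv+u)·(αu+v) + (α^(2^i)·(αu+v) + u)·(α^(2^i)·(αv+u) + v) = 0; (3) (αv+u)·(αu+v)^(2^i) + (α^(2^i)·(αu+v) + u)·(α·(αv+u)^(2^i) + v^(2^i)) = 0; if and only if u, v satisfy αv + u = 0 and α^(2^i)·(αu+v) + u = 0. -/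
/-!
Write `q = 2^i`, `β = α^q`, `γ = β^q` and
`B(a, t; x, y) = (ay + x)(ax + y) + (t(ax + y) + x)(t(ay + x) + y)`, so that equation (2) reads
`B(α, β; u, v) = 0`. If `αv + u ≠ 0`, equations (1) and (3) combine to `B(β, α; u^q, v^q) = 0`,
and the Frobenius image of (2) is `B(β, γ; u^q, v^q) = 0`. In characteristic 2,
`(β + 1)^2 B(β, t; x, y)` is a combination of `(βy + x)(βx + y)` and `(x + y)^2` with coefficients
depending on `t`; eliminating the first one from the two equations leaves
`(α + γ)(β + 1)^2 (αβ^2γ + (α + β)(β + γ)) (u^q + v^q)^2 = 0`.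

Since `gcd(2i, k) = 1`, the only elements of `F` fixed by `x ↦ x^(q^2)` are `0` and `1`. This rules
out `γ = α` and `β = 1`, and makes `x ↦ x^(q+1)` injective. The third factor is
`(αβ)^(q+1) + (α + β)^(q+1)`, so it vanishes only if `αβ + α + β = 0`, i.e. `(α + 1)^(q+1) = 1`,
i.e. `α = 0`. Finally `u^q = v^q` gives `u = v` and then (2) becomes `(αβ + α + β)^2 v^2 = 0`.
-/

open Function

theorem eq_zero_or_eq_one_of_pow_two_pow_eq_self {F : Type*} [Field F] [Finite F] {k j : ℕ}
    (hF : Nat.card F = 2 ^ k) (hj : j.Coprime k) {x : F} (hx : x ^ 2 ^ j = x) :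
    x = 0 ∨ x = 1 := by
  have hperiod (n : ℕ) (hn : x ^ 2 ^ n = x) : IsPeriodicPt (· ^ 2) n x := by
    rw [IsPeriodicPt, IsFixedPt, pow_iterate]; exact hn
  have hk : x ^ 2 ^ k = x := by
    have := Fintype.ofFinite F
    rw [← hF, Nat.card_eq_fintype_card, FiniteField.pow_card]
  have hsq : IsPeriodicPt (· ^ 2) 1 x := hj ▸ (hperiod j hx).gcd (hperiod k hk)
  exact eq_zero_or_one_of_sq_eq_self hsq

theorem eq_of_pow_succ_eq_pow_succ {F : Type*} [Field F] {q : ℕ}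
    (hfix : ∀ z : F, z ^ q ^ 2 = z → z = 0 ∨ z = 1) {x y : F}
    (h : x ^ (q + 1) = y ^ (q + 1)) : x = y := by
  rcases eq_or_ne y 0 with rfl | hy
  · simpa using h
  set z := x / y
  have hz : z ^ q * z = 1 := by
    rw [← pow_succ, div_pow, h, div_self (pow_ne_zero _ hy)]
  have hzq : z ^ q = z⁻¹ := eq_inv_of_mul_eq_one_left hz
  have hfixed : z ^ q ^ 2 = z := by rw [sq, pow_mul, hzq, inv_pow, hzq, inv_inv]
  rcases hfix z hfixed with h0 | h1
  · simp [h0] at hz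
  · exact (div_eq_one_iff_eq hy).mp h1

section ButterflyForm

variable {R S : Type*} [CommRing R] [CommRing S]

def butterflyForm (a t x y : R) : R :=
  (a * y + x) * (a * x + y) + (t * (a * x + y) + x) * (t * (a * y + x) + y)

theorem map_butterflyForm (f : R →+* S) (a t x y : R) :
    f (butterflyForm a t x y) = butterflyForm (f a) (f t) (f x) (f y) := by
  simp only [butterflyForm, map_add, map_mul]

variable [CharP R 2]

theorem butterflyForm_self (a t x : R) :
    butterflyForm a t x x = (a * t + a + t) ^ 2 * x ^ 2 := by
  unfold butterflyForm; grind

theorem mul_butterflyForm (a t x y A C : R) :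
    A * butterflyForm a t x y =
      (t * (a * y + x) + y) * (A * (t * (a * x + y) + x) + (a * y + x) * C)
        + (a * y + x) * (A * (a * x + y) + C * (t * (a * y + x) + y)) := by
  unfold butterflyForm; grind

theorem add_one_sq_mul_butterflyForm (a t x y : R) :
    (a + 1) ^ 2 * butterflyForm a t x y =
      (t * a + t + a) ^ 2 * ((a * y + x) * (a * x + y)) + (t * (a + 1) ^ 2 + a) * (x + y) ^ 2 := by
  unfold butterflyForm; grind

theorem butterflyForm_elim {a s t x y : R} (hs : butterflyForm a s x y = 0)
    (ht : butterflyForm a t x y = 0) :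
    (s + t) * (a + 1) ^ 2 * (s * a ^ 2 * t + (s + a) * (a + t)) * (x + y) ^ 2 = 0 := by
  have es := add_one_sq_mul_butterflyForm a s x y
  have et := add_one_sq_mul_butterflyForm a t x y
  rw [hs, mul_zero] at es
  rw [ht, mul_zero] at et
  grind

end ButterflyForm

section FrobeniusFixedPoints

variable {F : Type*} [Field F] [CharP F 2] {i : ℕ}

theorem mul_pow_two_pow_add_add_ne_zero (hfix : ∀ z : F, z ^ (2 ^ i) ^ 2 = z → z = 0 ∨ z = 1)
    {α : F} (hα0 : α ≠ 0) : α * α ^ 2 ^ i + α + α ^ 2 ^ i ≠ 0 := by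
  intro h
  have h' : (α + 1) ^ (2 ^ i + 1) = 1 ^ (2 ^ i + 1) := by
    rw [pow_succ, add_pow_char_pow, one_pow, one_pow]; grind
  exact hα0 (by simpa using eq_of_pow_succ_eq_pow_succ hfix h')

theorem eq_zero_of_butterfly_equations (hfix : ∀ z : F, z ^ (2 ^ i) ^ 2 = z → z = 0 ∨ z = 1)
    {α : F} (hα0 : α ≠ 0) (hα1 : α ≠ 1) {u v : F}
    (h1 : (α * v + u) * (α * (α * u + v) ^ 2 ^ i + u ^ 2 ^ i)
        + (α * v + u) ^ 2 ^ i * (α ^ 2 ^ i * (α * u + v) + u) = 0)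
    (h2 : butterflyForm α (α ^ 2 ^ i) u v = 0)
    (h3 : (α * v + u) * (α * u + v) ^ 2 ^ i
        + (α ^ 2 ^ i * (α * u + v) + u) * (α * (α * v + u) ^ 2 ^ i + v ^ 2 ^ i) = 0) :
    α * v + u = 0 := by
  by_contra hA
  have hinj : Injective (fun x : F => x ^ 2 ^ i) := fun x y h =>
    iterateFrobenius_inj F 2 i (by simpa [iterateFrobenius_def] using h)
  have hEα : butterflyForm (α ^ 2 ^ i) α (u ^ 2 ^ i) (v ^ 2 ^ i) = 0 := by
    simp only [add_pow_char_pow, mul_pow] at h1 h3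
    have h := mul_butterflyForm (α ^ 2 ^ i) α (u ^ 2 ^ i) (v ^ 2 ^ i) (α * v + u)
      (α ^ 2 ^ i * (α * u + v) + u)
    rw [h1, h3, mul_zero, mul_zero, add_zero] at h
    exact (mul_eq_zero.mp h).resolve_left hA
  have hEγ : butterflyForm (α ^ 2 ^ i) ((α ^ 2 ^ i) ^ 2 ^ i) (u ^ 2 ^ i) (v ^ 2 ^ i) = 0 := by
    simpa [map_butterflyForm, iterateFrobenius_def] using congrArg (iterateFrobenius F 2 i) h2
  have hD := butterflyForm_elim hEα hEγ
  simp only [mul_eq_zero, pow_eq_zero_iff two_ne_zero, CharTwo.add_eq_zero] at hD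
  rcases hD with ((hγ | hβ) | hN) | hUV
  · rw [← pow_mul, ← sq] at hγ
    rcases hfix α hγ.symm with h | h <;> contradiction
  · exact hα1 (hinj (by simpa using hβ))
  · have h' : (α + α ^ 2 ^ i) ^ (2 ^ i + 1) = (α * α ^ 2 ^ i) ^ (2 ^ i + 1) := by
      rw [pow_succ, pow_succ, add_pow_char_pow, mul_pow]
      linear_combination -hN
    apply mul_pow_two_pow_add_add_ne_zero hfix hα0
    grind [eq_of_pow_succ_eq_pow_succ hfix h']
  · obtain rfl : u = v := hinj hUV
    rw [butterflyForm_self] at h2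
    simp only [mul_eq_zero, pow_eq_zero_iff two_ne_zero] at h2
    rcases h2 with h | rfl
    · exact mul_pow_two_pow_add_add_ne_zero hfix hα0 h
    · simp at hA

theorem butterfly_equations_iff (hfix : ∀ z : F, z ^ (2 ^ i) ^ 2 = z → z = 0 ∨ z = 1)
    {α : F} (hα0 : α ≠ 0) (hα1 : α ≠ 1) (u v : F) :
    ((α * v + u) * (α * (α * u + v) ^ 2 ^ i + u ^ 2 ^ i)
        + (α * v + u) ^ 2 ^ i * (α ^ 2 ^ i * (α * u + v) + u) = 0 ∧
     (α * v + u) * (α * u + v)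
        + (α ^ 2 ^ i * (α * u + v) + u) * (α ^ 2 ^ i * (α * v + u) + v) = 0 ∧
     (α * v + u) * (α * u + v) ^ 2 ^ i
        + (α ^ 2 ^ i * (α * u + v) + u) * (α * (α * v + u) ^ 2 ^ i + v ^ 2 ^ i) = 0)
    ↔ (α * v + u = 0 ∧ α ^ 2 ^ i * (α * u + v) + u = 0) := by
  refine ⟨fun ⟨h1, h2, h3⟩ => ?_, fun ⟨hA, hC⟩ => by simp [hA, hC]⟩
  have hA := eq_zero_of_butterfly_equations hfix hα0 hα1 h1 h2 h3
  refine ⟨hA, ?_⟩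
  simp only [hA, mul_zero, zero_mul, zero_add] at h2
  rcases mul_eq_zero.mp h2 with hC | rfl
  · exact hC
  · simp_all

end FrobeniusFixedPoints

theorem butterfly_diff_key_lemma_general (k i : ℕ) (hk : Odd k)
    (hgcd : Nat.gcd i k = 1)
    (α : GaloisField 2 k) (hα0 : α ≠ 0) (hα1 : α ≠ 1) (u v : GaloisField 2 k) :
    ((α * v + u) * (α * (α * u + v) ^ 2 ^ i + u ^ 2 ^ i)
        + (α * v + u) ^ 2 ^ i * (α ^ 2 ^ i * (α * u + v) + u) = 0 ∧
     (α * v + u) * (α * u + v)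
        + (α ^ 2 ^ i * (α * u + v) + u) * (α ^ 2 ^ i * (α * v + u) + v) = 0 ∧
     (α * v + u) * (α * u + v) ^ 2 ^ i
        + (α ^ 2 ^ i * (α * u + v) + u) * (α * (α * v + u) ^ 2 ^ i + v ^ 2 ^ i) = 0)
    ↔ (α * v + u = 0 ∧ α ^ 2 ^ i * (α * u + v) + u = 0) := by
  have hco : (2 * i).Coprime k := Nat.Coprime.mul_left (Nat.coprime_two_left.mpr hk) hgcd
  refine butterfly_equations_iff (fun z hz => ?_) hα0 hα1 u v
  rw [← pow_mul'] at hz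
  exact eq_zero_or_eq_one_of_pow_two_pow_eq_self (GaloisField.card 2 k hk.pos.ne') hco hz

/-- Lemma 3.1: for `k` odd, `gcd(i,k) = 1`, `α ∈ GaloisField 2 k` with `α ≠ 0, 1`,
the three equations in `u, v` hold simultaneously iff `αv + u = 0` and
`α^(2^i)·(αu+v) + u = 0`. -/
theorem butterfly_diff_key_lemma (k i : ℕ) (hk : Odd k) (hkpos : 0 < k)
    (hipos : 0 < i) (hgcd : Nat.gcd i k = 1)
    (α : GaloisField 2 k) (hα0 : α ≠ 0) (hα1 : α ≠ 1) (u v : GaloisField 2 k) :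
    ((α * v + u) * (α * (α * u + v) ^ 2 ^ i + u ^ 2 ^ i)
        + (α * v + u) ^ 2 ^ i * (α ^ 2 ^ i * (α * u + v) + u) = 0 ∧
     (α * v + u) * (α * u + v)
        + (α ^ 2 ^ i * (α * u + v) + u) * (α ^ 2 ^ i * (α * v + u) + v) = 0 ∧
     (α * v + u) * (α * u + v) ^ 2 ^ i
        + (α ^ 2 ^ i * (α * u + v) + u) * (α * (α * v + u) ^ 2 ^ i + v ^ 2 ^ i) = 0)
    ↔ (α * v + u = 0 ∧ α ^ 2 ^ i * (α * u + v) + u = 0) :=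
  butterfly_diff_key_lemma_general k i hk hgcd α hα0 hα1 u v
end

section
/- Let k be an odd positive integer, i a positive integer with gcd(i,k) = 1, F = GaloisField 2 k, and α ∈ F with α ≠ 0 and α ≠ 1. For c, d ∈ F, the following three equations hold simultaneously: (1) (α^(2^i+1)·c + c + d)·(α^(2^i)·c + α·d)^(2^i) + (α^(2^i+1)·c + c + d)^(2^i)·(α·c + α^(2^i)·d) = 0; (2) (α·c + α^(2^i)·d)^(2^i)·(α^(2^i)·c + α·d)^(2^i) + (α^(2^i+1)·c + c + d)^(2^i)·(α^(2^i+1)·d + c + d)^(2^i) = 0; (3) (α^(2^i)·c + α·d)·(α^(2^i)·c + α·d)^(2^i) + (α^(2^i+1)·c + c + d)^(2^i)·(α^(2^i+1)·d + c + d) = 0; if and only if c, d satisfy α^(2^i+1)·c + c + d = 0 and α^(2^i)·c + α·d = 0. -/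
/-!
Write `q = 2 ^ i`, `σ x = x ^ q`, and `A, B, C, D` for the linear forms `α^(q+1) c + c + d`,
`α^q c + α d`, `α c + α^q d`, `α^(q+1) d + c + d`. If `A = 0`, the third equation leaves
`B ^ (q + 1) = 0`. Otherwise `u = B / A` turns the first and third equations into `C = A σu` and
`D = A u σu`. In characteristic two `(α + σα)² A = P B + Q C` and `(α + σα)² D = Q B + P C` with
`P = α + σα + α σα²`, `Q = α + σα + α² σα`, so both `(u, σu)` and `(u⁻¹, σu⁻¹)` lie on the line
`P X + Q Y = (α + σα)²`. This forces `P (u + u⁻¹) = s² = Q σ(u + u⁻¹)` with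
`s = α + σα + α σα`; applying `σ` to the first and comparing eliminates `u`:
`(α + σ²α) ((α + σα) (σα + σ²α) + α σα² σ²α) = 0`. For `x = α⁻¹` the second factor says that
`g = x + σx` satisfies `g σg = 1`, so `σ²` fixes `g`. As `gcd (2 i, k) = 1`, the fixed points of
`σ²` are `0` and `1`; so `σg = g`, i.e. `σ²x = x`, and `α` would lie in `𝔽₂`.
-/

theorem pow_char_eq_self_of_pow_char_pow_eq_self {K : Type*} [Field K] [Finite K] {p k m : ℕ}
    (hK : Nat.card K = p ^ k) (hmk : m.Coprime k) {x : K} (hx : x ^ p ^ m = x) : x ^ p = x := by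
  have : Fintype K := Fintype.ofFinite K
  have hk : x ^ p ^ k = x := by
    rw [← hK, Nat.card_eq_fintype_card]
    exact FiniteField.pow_card x
  have hper : ∀ n, x ^ p ^ n = x → Function.IsPeriodicPt (· ^ p) n x := fun n h => by
    rwa [Function.IsPeriodicPt, Function.IsFixedPt, pow_iterate]
  simpa [Function.IsPeriodicPt, Function.IsFixedPt, hmk.gcd_eq_one] using
    (hper m hx).gcd (hper k hk)

theorem GaloisField.eq_zero_or_one_of_iterateFrobenius_iterateFrobenius_eq_self {k i : ℕ}
    (hk : Odd k) (hkpos : 0 < k) (hik : i.Coprime k) (x : GaloisField 2 k)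
    (hx : iterateFrobenius _ 2 i (iterateFrobenius _ 2 i x) = x) : x = 0 ∨ x = 1 := by
  rw [iterateFrobenius_def, iterateFrobenius_def, ← pow_mul, ← pow_add] at hx
  have hcop : (i + i).Coprime k := by
    rw [← two_mul]
    exact (Nat.coprime_two_left.mpr hk).mul_left hik
  exact eq_zero_or_one_of_sq_eq_self
    (pow_char_eq_self_of_pow_char_pow_eq_self (GaloisField.card 2 k hkpos.ne') hcop hx)

section Butterfly

variable {F : Type*} [Field F]

theorem add_map_mul_map_add_map_ne_one (σ : F →+* F) (hσ : ∀ x, σ (σ x) = x → x = 0 ∨ x = 1)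
    {x : F} (hx0 : x ≠ 0) (hx1 : x ≠ 1) : (x + σ x) * σ (x + σ x) ≠ 1 := by
  set g := x + σ x
  intro hg
  have hσσg : σ (σ g) = g := by
    apply mul_left_cancel₀ (right_ne_zero_of_mul_eq_one hg)
    rw [mul_comm (σ g) g, hg, ← map_mul, hg, map_one]
  have hσg : σ g = g := by
    rcases hσ g hσσg with h | h <;> simp [h]
  simp only [g, map_add] at hσg
  rcases hσ x (by linear_combination hσg) with h | h
  exacts [hx0 h, hx1 h]

variable [CharP F 2]

theorem butterfly_ratio_system_mul_add_inv {α b u v : F} (hαb : α ≠ b) (hu : u ≠ 0)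
    (hv : v ≠ 0)
    (H1 : (α + b + α * b ^ 2) * u + (α + b + α ^ 2 * b) * v = (α + b) ^ 2)
    (H2 : (α + b + α ^ 2 * b) * u + (α + b + α * b ^ 2) * v = (α + b) ^ 2 * u * v) :
    (α + b + α * b ^ 2) * (u + u⁻¹) = (α + b + α * b) ^ 2 ∧
      (α + b + α ^ 2 * b) * (v + v⁻¹) = (α + b + α * b) ^ 2 := by
  have hαb' : (α + b) ^ 2 ≠ 0 := pow_ne_zero 2 (by rwa [Ne, CharTwo.add_eq_zero])
  have hPu : (α + b) ^ 2 * ((α + b + α * b ^ 2) * (u ^ 2 + 1) + (α + b + α * b) ^ 2 * u) = 0 := by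
    linear_combination (norm := ring_nf)
      ((α + b) ^ 2 * u + (α + b + α * b ^ 2)) * H1 + (α + b + α ^ 2 * b) * H2
    reduce_mod_char!
  replace hPu := (mul_eq_zero.mp hPu).resolve_left hαb'
  have hPQ : (α + b + α * b ^ 2) * (u ^ 2 + 1) * v + (α + b + α ^ 2 * b) * (v ^ 2 + 1) * u = 0 := by
    linear_combination (norm := ring_nf) u * v * H1 + H2
    reduce_mod_char!
  have hP : (α + b + α * b ^ 2) * (u + u⁻¹) = (α + b + α * b) ^ 2 := by
    field_simp
    linear_combination (norm := ring_nf) hPu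
    reduce_mod_char!
  refine ⟨hP, ?_⟩
  rw [← hP]
  field_simp
  linear_combination (norm := ring_nf) hPQ
  reduce_mod_char!

theorem butterfly_ratio_system_inconsistent (σ : F →+* F)
    (hσ : ∀ x, σ (σ x) = x → x = 0 ∨ x = 1) {α : F} (hα0 : α ≠ 0) (hα1 : α ≠ 1) (u : F)
    (H1 : (α + σ α + α * σ α ^ 2) * u + (α + σ α + α ^ 2 * σ α) * σ u = (α + σ α) ^ 2)
    (H2 : (α + σ α + α ^ 2 * σ α) * u + (α + σ α + α * σ α ^ 2) * σ u
      = (α + σ α) ^ 2 * u * σ u) : False := by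
  have hαb : α ≠ σ α := fun h => by
    rcases hσ α (by rw [← h, ← h]) with h' | h'
    exacts [hα0 h', hα1 h']
  have hαe : α + σ (σ α) ≠ 0 := fun h => by
    rcases hσ α (CharTwo.add_eq_zero.mp h).symm with h' | h'
    exacts [hα0 h', hα1 h']
  have hu : u ≠ 0 := by
    rintro rfl
    simp only [map_zero, mul_zero, add_zero] at H1
    exact hαb (CharTwo.add_eq_zero.mp (pow_eq_zero_iff two_ne_zero |>.mp H1.symm))
  obtain ⟨hPw, hQw⟩ :=
    butterfly_ratio_system_mul_add_inv hαb hu ((map_ne_zero σ).mpr hu) H1 H2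
  rw [← map_inv₀, ← map_add] at hQw
  have hσPw := congrArg σ hPw
  rw [map_mul, map_pow] at hσPw
  generalize σ (u + u⁻¹) = w at hσPw hQw
  simp only [map_add, map_mul, map_pow] at hσPw
  have hfac : (α + σ (σ α)) * ((α + σ α) * (σ α + σ (σ α)) + α * σ α ^ 2 * σ (σ α)) = 0 := by
    linear_combination (norm := ring_nf)
      (α + σ α + α ^ 2 * σ α) * hσPw - (σ α + σ (σ α) + σ α * σ (σ α) ^ 2) * hQw
    reduce_mod_char!
  apply add_map_mul_map_add_map_ne_one σ hσ (inv_ne_zero hα0) (inv_ne_one.mpr hα1)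
  have hb0 : σ α ≠ 0 := (map_ne_zero σ).mpr hα0
  have he0 : σ (σ α) ≠ 0 := (map_ne_zero σ).mpr hb0
  simp only [map_add, map_inv₀]
  field_simp
  linear_combination (norm := ring_nf) (mul_eq_zero.mp hfac).resolve_left hαe
  reduce_mod_char!

theorem butterfly_forms_eq_zero_of_eqs (σ : F →+* F) (hσ : ∀ x, σ (σ x) = x → x = 0 ∨ x = 1)
    {α : F} (hα0 : α ≠ 0) (hα1 : α ≠ 1) {c d : F}
    (h1 : (σ α * α * c + c + d) * σ (σ α * c + α * d)
      + σ (σ α * α * c + c + d) * (α * c + σ α * d) = 0)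
    (h3 : (σ α * c + α * d) * σ (σ α * c + α * d)
      + σ (σ α * α * c + c + d) * (σ α * α * d + c + d) = 0) :
    σ α * α * c + c + d = 0 ∧ σ α * c + α * d = 0 := by
  by_cases hA : σ α * α * c + c + d = 0
  · rw [hA, map_zero, zero_mul, add_zero, mul_eq_zero, map_eq_zero, or_self] at h3
    exact ⟨hA, h3⟩
  exfalso
  obtain ⟨u, hB⟩ : ∃ u, σ α * c + α * d = (σ α * α * c + c + d) * u :=
    ⟨_, (mul_div_cancel₀ _ hA).symm⟩
  have hσA : σ (σ α * α * c + c + d) ≠ 0 := (map_ne_zero σ).mpr hA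
  rw [hB, map_mul] at h1 h3
  have hC : α * c + σ α * d = (σ α * α * c + c + d) * σ u := by
    refine CharTwo.add_eq_zero.mp ((mul_eq_zero.mp ?_).resolve_left hσA)
    linear_combination h1
  have hD : σ α * α * d + c + d = (σ α * α * c + c + d) * u * σ u := by
    refine CharTwo.add_eq_zero.mp ((mul_eq_zero.mp ?_).resolve_left hσA)
    linear_combination h3
  refine butterfly_ratio_system_inconsistent σ hσ hα0 hα1 u (mul_left_cancel₀ hA ?_)
    (mul_left_cancel₀ hA ?_)
  · linear_combination (norm := ring_nf)
      (α + σ α + α * σ α ^ 2) * hB + (α + σ α + α ^ 2 * σ α) * hC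
    reduce_mod_char!
  · linear_combination (norm := ring_nf)
      (α + σ α) ^ 2 * hD + (α + σ α + α ^ 2 * σ α) * hB + (α + σ α + α * σ α ^ 2) * hC
    reduce_mod_char!

end Butterfly

theorem butterfly_walsh_key_lemma_general (k i : ℕ) (hk : Odd k) (hkpos : 0 < k)
    (hgcd : Nat.gcd i k = 1)
    (α : GaloisField 2 k) (hα0 : α ≠ 0) (hα1 : α ≠ 1) (c d : GaloisField 2 k) :
    ((α ^ (2 ^ i + 1) * c + c + d) * (α ^ 2 ^ i * c + α * d) ^ 2 ^ i
        + (α ^ (2 ^ i + 1) * c + c + d) ^ 2 ^ i * (α * c + α ^ 2 ^ i * d) = 0 ∧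
     (α * c + α ^ 2 ^ i * d) ^ 2 ^ i * (α ^ 2 ^ i * c + α * d) ^ 2 ^ i
        + (α ^ (2 ^ i + 1) * c + c + d) ^ 2 ^ i
          * (α ^ (2 ^ i + 1) * d + c + d) ^ 2 ^ i = 0 ∧
     (α ^ 2 ^ i * c + α * d) * (α ^ 2 ^ i * c + α * d) ^ 2 ^ i
        + (α ^ (2 ^ i + 1) * c + c + d) ^ 2 ^ i * (α ^ (2 ^ i + 1) * d + c + d) = 0)
    ↔ (α ^ (2 ^ i + 1) * c + c + d = 0 ∧ α ^ 2 ^ i * c + α * d = 0) := by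
  constructor
  · rintro ⟨h1, -, h3⟩
    rw [pow_succ] at h1 h3 ⊢
    exact butterfly_forms_eq_zero_of_eqs (iterateFrobenius _ 2 i)
      (GaloisField.eq_zero_or_one_of_iterateFrobenius_iterateFrobenius_eq_self hk hkpos hgcd)
      hα0 hα1 h1 h3
  · rintro ⟨hA, hB⟩
    simp [hA, hB]

/-- Lemma 3.5: for `k` odd, `gcd(i,k) = 1`, `α ∈ GaloisField 2 k` with `α ≠ 0, 1`,
the three equations in `c, d` hold simultaneously iff
`α^(2^i+1)·c + c + d = 0` and `α^(2^i)·c + α·d = 0`. -/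
theorem butterfly_walsh_key_lemma (k i : ℕ) (hk : Odd k) (hkpos : 0 < k)
    (hipos : 0 < i) (hgcd : Nat.gcd i k = 1)
    (α : GaloisField 2 k) (hα0 : α ≠ 0) (hα1 : α ≠ 1) (c d : GaloisField 2 k) :
    ((α ^ (2 ^ i + 1) * c + c + d) * (α ^ 2 ^ i * c + α * d) ^ 2 ^ i
        + (α ^ (2 ^ i + 1) * c + c + d) ^ 2 ^ i * (α * c + α ^ 2 ^ i * d) = 0 ∧
     (α * c + α ^ 2 ^ i * d) ^ 2 ^ i * (α ^ 2 ^ i * c + α * d) ^ 2 ^ i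
        + (α ^ (2 ^ i + 1) * c + c + d) ^ 2 ^ i
          * (α ^ (2 ^ i + 1) * d + c + d) ^ 2 ^ i = 0 ∧
     (α ^ 2 ^ i * c + α * d) * (α ^ 2 ^ i * c + α * d) ^ 2 ^ i
        + (α ^ (2 ^ i + 1) * c + c + d) ^ 2 ^ i * (α ^ (2 ^ i + 1) * d + c + d) = 0)
    ↔ (α ^ (2 ^ i + 1) * c + c + d = 0 ∧ α ^ 2 ^ i * c + α * d = 0) :=
  butterfly_walsh_key_lemma_general k i hk hkpos hgcd α hα0 hα1 c d
end

section
/- Let k be an odd positive integer, i a positive integer with gcd(i,k) = 1, F = GaloisField 2 k, and α ∈ F with α ≠ 0 and α ≠ 1. Then for any (c,d) ∈ F × F with (c,d) ≠ (0,0), the number of pairs (u,v) ∈ F × F satisfying the system: (1) (α^(2^i+1)·c + c + d)^(2^i)·u^(2^(2i)) + (α^(2^i+1)·c + c + d)·u + (α·c + α^(2^i)·d)^(2^i)·v^(2^(2i)) + (α^(2^i)·c + α·d)·v = 0 and (2) (α^(2^i)·c + α·d)^(2^i)·u^(2^(2i)) + (α·c + α^(2^i)·d)·u + (α^(2^i+1)·d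 + c + d)^(2^i)·v^(2^(2i)) + (α^(2^i+1)·d + c + d)·v = 0 is at most 4. -/
/-!
Write `σ x = x ^ 2 ^ i`. The system says `σ (N (σ w)) = Nᵀ w` for `N = !![A, B; B', D]`, and
since `gcd (2 i, k) = 1` the only fixed points of `σ²` are `0` and `1`.

If `N` is invertible, solutions that are linearly independent over `𝔽₂` stay independent over the
whole field: from `z = a • x + b • y` one gets `(a - σ² a) • Nᵀ x + (b - σ² b) • Nᵀ y = 0`. Hence
there are at most `2 ^ 2` solutions.

If `det N = 0`, then `A` or `D` is nonzero, say `A`, and `N` has rank one; the system then forces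
`w = 0` unless `σ (B' / A) = B / A`. In that case `ρ = B' / A` and `σ ρ` are roots of reciprocal
quadratics, and comparing one with the `σ`-image of the other gives `σ² α = α` or
`m ^ (2 ^ i + 1) = 1` for `m = α⁻¹ + σ α⁻¹`; both put `α` in `𝔽₂`.
-/

open Function Module

section TwistedKernel

variable {F V : Type*} [Field F] [AddCommGroup V] [Module F V] {τ : F →+* F}
  (P : V →ₛₗ[τ] V) {Q : V →ₗ[F] V}

theorem map_coeff_eq_of_linearIndependent {ι : Type*} [Fintype ι] (hQ : Injective Q)
    {b : ι → V} (hb : LinearIndependent F b) (hbP : ∀ j, P (b j) + Q (b j) = 0) {a : ι → F}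
    (ha : P (∑ j, a j • b j) + Q (∑ j, a j • b j) = 0) (j : ι) : τ (a j) = a j := by
  have hQb : LinearIndependent F (Q ∘ b) := hb.map' Q (LinearMap.ker_eq_bot.mpr hQ)
  have hP : ∀ j, P (b j) = -Q (b j) := fun j => eq_neg_of_add_eq_zero_left (hbP j)
  have hsum : ∑ j, (a j - τ (a j)) • Q (b j) = 0 := by
    simpa only [map_sum, LinearMap.map_smulₛₗ, hP, smul_neg, sub_smul, Finset.sum_sub_distrib,
      Finset.sum_neg_distrib, RingHom.id_apply, neg_add_eq_sub] using ha
  exact (sub_eq_zero.mp (Fintype.linearIndependent_iff.mp hQb _ hsum j)).symm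

theorem ncard_setOf_add_eq_zero_le [Finite F] [FiniteDimensional F V] (hQ : Injective Q) :
    {v | P v + Q v = 0}.ncard ≤ Nat.card {x // τ x = x} ^ finrank F V := by
  set S := {v | P v + Q v = 0}
  obtain ⟨b, hbS, hspan, hb⟩ := exists_linearIndependent F S
  have : Fintype b := @Fintype.ofFinite _ hb.finite
  let comb : (b → {x // τ x = x}) → V := fun a => ∑ j, (a j : F) • (j : V)
  have hS : S ⊆ Set.range comb := by
    intro v hv
    have hv' : v ∈ Submodule.span F (Set.range ((↑) : b → V)) := by
      rw [Subtype.range_coe, hspan]; exact Submodule.subset_span hv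
    obtain ⟨a, rfl⟩ := (Submodule.mem_span_range_iff_exists_fun F).mp hv'
    exact ⟨fun j => ⟨a j, map_coeff_eq_of_linearIndependent P hQ hb (fun j => hbS j.2) hv j⟩,
      rfl⟩
  have : Nonempty {x // τ x = x} := ⟨⟨0, map_zero τ⟩⟩
  calc S.ncard ≤ (Set.range comb).ncard := Set.ncard_le_ncard hS (Set.toFinite _)
    _ ≤ Nat.card (b → {x // τ x = x}) := Finite.card_range_le comb
    _ = Nat.card {x // τ x = x} ^ Fintype.card b := by
      rw [Nat.card_fun, Nat.card_eq_fintype_card (α := b)]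
    _ ≤ Nat.card {x // τ x = x} ^ finrank F V :=
      Nat.pow_le_pow_right Nat.card_pos hb.fintype_card_le_finrank

end TwistedKernel

section PairMap

variable {F : Type*} [Field F]

def pairMap (ρ : F →+* F) (a b c d : F) : F × F →ₛₗ[ρ] F × F where
  toFun w := (a * ρ w.1 + b * ρ w.2, c * ρ w.1 + d * ρ w.2)
  map_add' v w := by
    simp only [Prod.fst_add, Prod.snd_add, map_add, Prod.mk_add_mk]
    congr 1 <;> ring
  map_smul' r w := by
    simp only [Prod.smul_fst, Prod.smul_snd, smul_eq_mul, map_mul, Prod.smul_mk]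
    congr 1 <;> ring

@[simp]
theorem pairMap_apply (ρ : F →+* F) (a b c d : F) (w : F × F) :
    pairMap ρ a b c d w = (a * ρ w.1 + b * ρ w.2, c * ρ w.1 + d * ρ w.2) :=
  rfl

theorem pairMap_injective (ρ : F →+* F) {a b c d : F} (h : a * d ≠ b * c) :
    Injective (pairMap ρ a b c d) := by
  refine (injective_iff_map_eq_zero _).mpr fun w hw => ?_
  obtain ⟨h1, h2⟩ := Prod.ext_iff.mp hw
  simp only [pairMap_apply, Prod.fst_zero, Prod.snd_zero] at h1 h2
  have hdet : a * d - b * c ≠ 0 := sub_ne_zero.mpr h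
  have hw1 : (a * d - b * c) * ρ w.1 = 0 := by linear_combination d * h1 - b * h2
  have hw2 : (a * d - b * c) * ρ w.2 = 0 := by linear_combination a * h2 - c * h1
  simp only [mul_eq_zero, hdet, map_eq_zero, false_or] at hw1 hw2
  exact Prod.ext hw1 hw2

end PairMap

section LinearizedSystem

variable {F : Type*} [Field F] (σ : F →+* F)

def linearizedSolutions (A B B' D : F) : Set (F × F) :=
  {p | σ A * σ (σ p.1) + A * p.1 + σ B * σ (σ p.2) + B' * p.2 = 0 ∧
    σ B' * σ (σ p.1) + B * p.1 + σ D * σ (σ p.2) + D * p.2 = 0}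

theorem linearizedSolutions_eq_setOf_add_eq_zero (A B B' D : F) :
    linearizedSolutions σ A B B' D =
      {w | pairMap (σ.comp σ) (σ A) (σ B) (σ B') (σ D) w
        + pairMap (RingHom.id F) A B' B D w = 0} := by
  ext ⟨u, v⟩
  simp only [linearizedSolutions, Set.mem_ofPred_eq, pairMap_apply, RingHom.comp_apply,
    RingHom.id_apply, Prod.mk_add_mk, Prod.mk_eq_zero]
  constructor <;> rintro ⟨h1, h2⟩ <;> exact ⟨by linear_combination h1, by linear_combination h2⟩

theorem ncard_linearizedSolutions_le_four [Finite F] (hfix : ∀ x, σ (σ x) = x → x = 0 ∨ x = 1)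
    {A B B' D : F} (hdet : A * D ≠ B * B') : (linearizedSolutions σ A B B' D).ncard ≤ 4 := by
  have hcard : Nat.card {x // (σ.comp σ) x = x} ≤ 2 :=
    calc Nat.card {x // (σ.comp σ) x = x} = ({x | σ (σ x) = x} : Set F).ncard := rfl
      _ ≤ ({0, 1} : Set F).ncard := Set.ncard_le_ncard (fun x hx => hfix x hx) (Set.toFinite _)
      _ = 2 := Set.ncard_pair zero_ne_one
  rw [linearizedSolutions_eq_setOf_add_eq_zero]
  calc _ ≤ Nat.card {x // (σ.comp σ) x = x} ^ finrank F (F × F) :=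
        ncard_setOf_add_eq_zero_le _ (pairMap_injective _ (by rwa [mul_comm B']))
    _ ≤ 2 ^ 2 := by rw [finrank_prod, finrank_self]; exact Nat.pow_le_pow_left hcard 2
    _ = 4 := by norm_num

theorem linearizedSolutions_subset_zero_of_det_eq_zero {A B B' D : F} (hA : A ≠ 0)
    (hdet : A * D = B * B') (hE : σ (B' / A) ≠ B / A) : linearizedSolutions σ A B B' D ⊆ {0} := by
  rintro ⟨u, v⟩ ⟨h1, h2⟩
  -- `(B', D) = ρ • (A, B)`, so the system only involves `l` and `μ` below.
  set ρ := B' / A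
  have hB' : B' = ρ * A := (div_mul_cancel₀ B' hA).symm
  have hBA : B / A * A = B := div_mul_cancel₀ B hA
  have hD : D = ρ * B := mul_left_cancel₀ hA (by rw [hdet, hB']; ring)
  set l := A * σ u + B * σ v
  set μ := A * u + B' * v
  have e1 : σ l + μ = 0 := by simp only [l, μ, map_add, map_mul]; linear_combination h1
  have e2 : σ ρ * σ l + B / A * μ = 0 := by
    simp only [l, μ, map_add, map_mul]
    rw [hB', hD, map_mul, map_mul] at h2
    rw [hB']
    linear_combination h2 + (u + ρ * v) * hBA
  have hl : σ l = 0 := by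
    have : (σ ρ - B / A) * σ l = 0 := by linear_combination e2 - B / A * e1
    exact (mul_eq_zero.mp this).resolve_left (sub_ne_zero.mpr hE)
  have hu : u = -(ρ * v) := by
    have : A * (u + ρ * v) = 0 := by linear_combination e1 - hl - v * hB'
    exact eq_neg_of_add_eq_zero_left ((mul_eq_zero.mp this).resolve_left hA)
  have hv : v = 0 := by
    have : (σ ρ - B / A) * (A * σ v) = 0 := by
      have h0 : l = 0 := (map_eq_zero σ).mp hl
      simp only [l, hu, map_neg, map_mul] at h0
      linear_combination -h0 - σ v * hBA
    simpa [sub_ne_zero.mpr hE, hA] using this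
  simp [hu, hv]

theorem linearizedSolutions_swap (A B B' D : F) :
    linearizedSolutions σ D B' B A = Prod.swap ⁻¹' linearizedSolutions σ A B B' D := by
  ext ⟨u, v⟩
  simp only [linearizedSolutions, Set.mem_preimage, Prod.swap_prod_mk, Set.mem_ofPred_eq]
  constructor <;> rintro ⟨h1, h2⟩ <;> exact ⟨by linear_combination h2, by linear_combination h1⟩

end LinearizedSystem

section FixedFieldOfSquare

variable {F : Type*} [Field F] {σ : F →+* F}

theorem eq_zero_or_one_of_map_eq_self (hfix : ∀ x, σ (σ x) = x → x = 0 ∨ x = 1) {x : F}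
    (hx : σ x = x) : x = 0 ∨ x = 1 :=
  hfix x (by rw [hx, hx])

theorem eq_one_of_map_mul_self_eq_one (hfix : ∀ x, σ (σ x) = x → x = 0 ∨ x = 1) {x : F}
    (hx : σ x * x = 1) : x = 1 := by
  have hinv : σ x = x⁻¹ := eq_inv_of_mul_eq_one_left hx
  exact (hfix x (by rw [hinv, map_inv₀, hinv, inv_inv])).resolve_left
    (right_ne_zero_of_mul_eq_one hx)

variable [CharP F 2]

theorem add_map_mul_add_map_ne (hfix : ∀ x, σ (σ x) = x → x = 0 ∨ x = 1) {a : F}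
    (ha : a ≠ 0) : (a + σ a) * (σ a + σ (σ a)) ≠ a * σ a ^ 2 * σ (σ a) := by
  intro h
  -- `h` says `σ m * m = 1` for `m = a⁻¹ + σ a⁻¹`.
  have hσa : σ a ≠ 0 := (map_ne_zero σ).mpr ha
  have hσσa : σ (σ a) ≠ 0 := (map_ne_zero σ).mpr hσa
  set z := a⁻¹
  have hz : σ (z + σ z) * (z + σ z) = 1 := by
    simp only [z, map_add, map_inv₀]
    field_simp
    linear_combination h
  have h1 : σ z = z + 1 := by
    have hm := eq_one_of_map_mul_self_eq_one hfix hz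
    grind
  have h2 : σ (σ z) = z := by
    rw [h1, map_add, h1, map_one]
    grind
  rcases hfix z h2 with h0 | h0
  · exact inv_ne_zero ha h0
  · rw [h0, map_one] at h1
    grind

theorem reciprocal_quadratics_of_relations {a b x ρ : F}
    (h1 : (a ^ 2 * b + a + b) * x + (a * b ^ 2 + a + b) * ρ = (a + b) ^ 2)
    (h2 : (a * b ^ 2 + a + b) * x + (a ^ 2 * b + a + b) * ρ = (a + b) ^ 2 * x * ρ) :
    (a + b) ^ 2 *
        ((a ^ 2 * b + a + b) * x ^ 2 + (a * b + a + b) ^ 2 * x + (a ^ 2 * b + a + b)) = 0 ∧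
      (a + b) ^ 2 *
        ((a * b ^ 2 + a + b) * ρ ^ 2 + (a * b + a + b) ^ 2 * ρ + (a * b ^ 2 + a + b)) = 0 :=
  ⟨by linear_combination (norm := grind) (a * b ^ 2 + a + b) * h2
      - (a ^ 2 * b + a + b - (a + b) ^ 2 * x) * h1,
   by linear_combination (norm := grind) (a ^ 2 * b + a + b) * h2
      - (a * b ^ 2 + a + b - (a + b) ^ 2 * ρ) * h1⟩

theorem butterfly_relations_absurd (hfix : ∀ x, σ (σ x) = x → x = 0 ∨ x = 1) {a ρ : F}
    (ha0 : a ≠ 0) (ha1 : a ≠ 1)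
    (h1 : (a ^ 2 * σ a + a + σ a) * σ ρ + (a * σ a ^ 2 + a + σ a) * ρ = (a + σ a) ^ 2)
    (h2 : (a * σ a ^ 2 + a + σ a) * σ ρ + (a ^ 2 * σ a + a + σ a) * ρ =
      (a + σ a) ^ 2 * σ ρ * ρ) : False := by
  have hg : (a + σ a) ^ 2 ≠ 0 := by
    refine pow_ne_zero 2 fun h => ?_
    rcases eq_zero_or_one_of_map_eq_self hfix (CharTwo.add_eq_zero.mp h).symm with h | h <;>
      contradiction
  have hx : σ ρ ≠ 0 := by
    intro hx
    rw [hx, (map_eq_zero σ).mp hx] at h1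
    exact hg (by simpa using h1.symm)
  obtain ⟨quadP, quadQ⟩ := reciprocal_quadratics_of_relations h1 h2
  replace quadP := (mul_eq_zero.mp quadP).resolve_left hg
  have quadQσ := congrArg σ ((mul_eq_zero.mp quadQ).resolve_left hg)
  simp only [map_add, map_mul, map_pow, map_zero] at quadQσ
  set b' := σ (σ a)
  have hdiff : σ ρ * ((σ a * b' ^ 2 + σ a + b') * (a * σ a + a + σ a) ^ 2
      - (a ^ 2 * σ a + a + σ a) * (σ a * b' + σ a + b') ^ 2) = 0 := by
    linear_combination (σ a * b' ^ 2 + σ a + b') * quadP - (a ^ 2 * σ a + a + σ a) * quadQσ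
  have hfactor : (a + b') * ((a + σ a) * (σ a + b') - a * σ a ^ 2 * b') = 0 := by
    linear_combination (norm := grind) (mul_eq_zero.mp hdiff).resolve_left hx
  rcases mul_eq_zero.mp hfactor with h | h
  · rcases hfix a (CharTwo.add_eq_zero.mp h).symm with h | h <;> contradiction
  · exact add_map_mul_add_map_ne hfix ha0 (sub_eq_zero.mp h)

end FixedFieldOfSquare

section Butterfly

variable {F : Type*} [Field F] (σ : F →+* F)

/-- With `σ = (· ^ 2 ^ i)` this is `α ^ (2 ^ i + 1) * c + c + d`; the four coefficients of the
system are `butterflyDiag` and `butterflyOff` at `(c, d)` and at `(d, c)`. -/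
def butterflyDiag (a c d : F) : F := σ a * a * c + c + d

def butterflyOff (a c d : F) : F := a * c + σ a * d

def butterflySolutions (a c d : F) : Set (F × F) :=
  linearizedSolutions σ (butterflyDiag σ a c d) (butterflyOff σ a c d) (butterflyOff σ a d c)
    (butterflyDiag σ a d c)

theorem butterflySolutions_swap (a c d : F) :
    butterflySolutions σ a d c = Prod.swap ⁻¹' butterflySolutions σ a c d :=
  linearizedSolutions_swap σ _ _ _ _

variable [CharP F 2] {σ}

theorem butterfly_coeff_relations (a c d : F) :
    (a ^ 2 * σ a + a + σ a) * butterflyOff σ a c d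
        + (a * σ a ^ 2 + a + σ a) * butterflyOff σ a d c
        = (a + σ a) ^ 2 * butterflyDiag σ a c d ∧
      (a * σ a ^ 2 + a + σ a) * butterflyOff σ a c d
        + (a ^ 2 * σ a + a + σ a) * butterflyOff σ a d c
        = (a + σ a) ^ 2 * butterflyDiag σ a d c := by
  constructor <;> simp only [butterflyDiag, butterflyOff] <;> grind

theorem butterflyDiag_ne_zero_or_ne_zero {a c d : F} (ha : a ≠ 0) (hcd : (c, d) ≠ (0, 0)) :
    butterflyDiag σ a c d ≠ 0 ∨ butterflyDiag σ a d c ≠ 0 := by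
  by_contra! h
  obtain ⟨hA, hD⟩ := h
  simp only [butterflyDiag] at hA hD
  have hσa : σ a * a ≠ 0 := mul_ne_zero ((map_ne_zero σ).mpr ha) ha
  have hdc : d = c := by
    have : σ a * a * (c + d) = 0 := by linear_combination (norm := grind) hA + hD
    exact (CharTwo.add_eq_zero.mp ((mul_eq_zero.mp this).resolve_left hσa)).symm
  have hc : c = 0 := by
    rw [hdc] at hA
    exact (mul_eq_zero.mp (by linear_combination (norm := grind) hA)).resolve_left hσa
  exact hcd (by rw [hc, hdc, hc])

theorem map_div_ne_of_butterfly_det_eq (hfix : ∀ x, σ (σ x) = x → x = 0 ∨ x = 1) {a c d : F}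
    (ha0 : a ≠ 0) (ha1 : a ≠ 1) (hA : butterflyDiag σ a c d ≠ 0)
    (hdet : butterflyDiag σ a c d * butterflyDiag σ a d c
      = butterflyOff σ a c d * butterflyOff σ a d c) :
    σ (butterflyOff σ a d c / butterflyDiag σ a c d)
      ≠ butterflyOff σ a c d / butterflyDiag σ a c d := by
  obtain ⟨hR1, hR2⟩ := butterfly_coeff_relations (σ := σ) a c d
  intro hE
  refine butterfly_relations_absurd hfix ha0 ha1
    (ρ := butterflyOff σ a d c / butterflyDiag σ a c d) ?_ ?_ <;> rw [hE] <;> field_simp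
  · linear_combination hR1
  · linear_combination butterflyDiag σ a c d * hR2 + (a + σ a) ^ 2 * hdet

theorem butterflySolutions_subset_zero (hfix : ∀ x, σ (σ x) = x → x = 0 ∨ x = 1) {a c d : F}
    (ha0 : a ≠ 0) (ha1 : a ≠ 1) (hA : butterflyDiag σ a c d ≠ 0)
    (hdet : butterflyDiag σ a c d * butterflyDiag σ a d c
      = butterflyOff σ a c d * butterflyOff σ a d c) :
    butterflySolutions σ a c d ⊆ {0} :=
  linearizedSolutions_subset_zero_of_det_eq_zero σ hA hdet
    (map_div_ne_of_butterfly_det_eq hfix ha0 ha1 hA hdet)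

theorem butterflySolutions_subsingleton (hfix : ∀ x, σ (σ x) = x → x = 0 ∨ x = 1) {a c d : F}
    (ha0 : a ≠ 0) (ha1 : a ≠ 1) (hcd : (c, d) ≠ (0, 0))
    (hdet : butterflyDiag σ a c d * butterflyDiag σ a d c
      = butterflyOff σ a c d * butterflyOff σ a d c) :
    (butterflySolutions σ a c d).Subsingleton := by
  rcases butterflyDiag_ne_zero_or_ne_zero ha0 hcd with hA | hD
  · exact Set.subsingleton_singleton.anti (butterflySolutions_subset_zero hfix ha0 ha1 hA hdet)
  · rw [butterflySolutions_swap σ a d c]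
    refine (Set.subsingleton_singleton.anti
      (butterflySolutions_subset_zero hfix ha0 ha1 hD ?_)).preimage Prod.swap_injective
    rw [mul_comm, hdet, mul_comm]

theorem ncard_butterflySolutions_le_four [Finite F] (hfix : ∀ x, σ (σ x) = x → x = 0 ∨ x = 1)
    {a c d : F} (ha0 : a ≠ 0) (ha1 : a ≠ 1) (hcd : (c, d) ≠ (0, 0)) :
    (butterflySolutions σ a c d).ncard ≤ 4 := by
  by_cases hdet : butterflyDiag σ a c d * butterflyDiag σ a d c
      = butterflyOff σ a c d * butterflyOff σ a d c
  · exact (Set.ncard_le_one_iff_subsingleton.mpr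
      (butterflySolutions_subsingleton hfix ha0 ha1 hcd hdet)).trans (by norm_num)
  · exact ncard_linearizedSolutions_le_four σ hfix hdet

end Butterfly

theorem eq_zero_or_one_of_pow_two_pow_eq_self {F : Type*} [Field F] [Finite F] {k n : ℕ}
    (hcard : Nat.card F = 2 ^ k) (hnk : n.Coprime k) {x : F} (hx : x ^ 2 ^ n = x) :
    x = 0 ∨ x = 1 := by
  refine (eq_or_ne x 0).imp id fun hx0 => ?_
  have : Fintype F := Fintype.ofFinite F
  have hn : x ^ (2 ^ n - 1) = 1 := by
    rw [pow_sub₀ x hx0 Nat.one_le_two_pow, hx, pow_one, mul_inv_cancel₀ hx0]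
  have hk : x ^ (2 ^ k - 1) = 1 := by
    rw [← hcard, Nat.card_eq_fintype_card]
    exact FiniteField.pow_card_sub_one_eq_one x hx0
  simpa [Nat.pow_sub_one_gcd_pow_sub_one, hnk.gcd_eq_one] using pow_gcd_eq_one.mpr ⟨hn, hk⟩

theorem butterfly_radical_at_most_four_solutions_general (k i : ℕ) (hk : Odd k)
    (hgcd : Nat.gcd i k = 1)
    (α : GaloisField 2 k) (hα0 : α ≠ 0) (hα1 : α ≠ 1)
    (c d : GaloisField 2 k) (hcd : (c, d) ≠ (0, 0)) :
    Set.ncard {p : GaloisField 2 k × GaloisField 2 k |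
      (α ^ (2 ^ i + 1) * c + c + d) ^ 2 ^ i * p.1 ^ 2 ^ (2 * i)
          + (α ^ (2 ^ i + 1) * c + c + d) * p.1
          + (α * c + α ^ 2 ^ i * d) ^ 2 ^ i * p.2 ^ 2 ^ (2 * i)
          + (α ^ 2 ^ i * c + α * d) * p.2 = 0 ∧
      (α ^ 2 ^ i * c + α * d) ^ 2 ^ i * p.1 ^ 2 ^ (2 * i)
          + (α * c + α ^ 2 ^ i * d) * p.1
          + (α ^ (2 ^ i + 1) * d + c + d) ^ 2 ^ i * p.2 ^ 2 ^ (2 * i)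
          + (α ^ (2 ^ i + 1) * d + c + d) * p.2 = 0} ≤ 4 := by
  set σ := iterateFrobenius (GaloisField 2 k) 2 i
  have hσ : ∀ x, σ x = x ^ 2 ^ i := iterateFrobenius_def 2 i
  have hσσ : ∀ x, σ (σ x) = x ^ 2 ^ (2 * i) := fun x => by
    rw [hσ, hσ, ← pow_mul, ← pow_add, two_mul]
  have hfix : ∀ x, σ (σ x) = x → x = 0 ∨ x = 1 := fun x hx =>
    eq_zero_or_one_of_pow_two_pow_eq_self (GaloisField.card 2 k hk.pos.ne')
      ((Nat.coprime_two_left.mpr hk).mul_left hgcd) ((hσσ x).symm.trans hx)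
  convert ncard_butterflySolutions_le_four hfix hα0 hα1 hcd using 2
  ext ⟨u, v⟩
  simp only [butterflySolutions, linearizedSolutions, butterflyDiag, butterflyOff, hσ,
    Set.mem_ofPred_eq, ← pow_succ]
  constructor <;> rintro ⟨h1, h2⟩ <;> exact ⟨by linear_combination h1, by linear_combination h2⟩

/-- Lemma 3.6: for `k` odd, `gcd(i,k) = 1`, `α ≠ 0, 1` and `(c,d) ≠ (0,0)`, the
linearized system in `(u,v)` has at most 4 solutions. -/
theorem butterfly_radical_at_most_four_solutions (k i : ℕ) (hk : Odd k) (hkpos : 0 < k)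
    (hipos : 0 < i) (hgcd : Nat.gcd i k = 1)
    (α : GaloisField 2 k) (hα0 : α ≠ 0) (hα1 : α ≠ 1)
    (c d : GaloisField 2 k) (hcd : (c, d) ≠ (0, 0)) :
    Set.ncard {p : GaloisField 2 k × GaloisField 2 k |
      (α ^ (2 ^ i + 1) * c + c + d) ^ 2 ^ i * p.1 ^ 2 ^ (2 * i)
          + (α ^ (2 ^ i + 1) * c + c + d) * p.1
          + (α * c + α ^ 2 ^ i * d) ^ 2 ^ i * p.2 ^ 2 ^ (2 * i)
          + (α ^ 2 ^ i * c + α * d) * p.2 = 0 ∧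
      (α ^ 2 ^ i * c + α * d) ^ 2 ^ i * p.1 ^ 2 ^ (2 * i)
          + (α * c + α ^ 2 ^ i * d) * p.1
          + (α ^ (2 ^ i + 1) * d + c + d) ^ 2 ^ i * p.2 ^ 2 ^ (2 * i)
          + (α ^ (2 ^ i + 1) * d + c + d) * p.2 = 0} ≤ 4 :=
  butterfly_radical_at_most_four_solutions_general k i hk hgcd α hα0 hα1 c d hcd
end

section
/- Let k be an odd positive integer, i a positive integer with gcd(i,k) = 1, t a natural number with 0 ≤ t ≤ k−1, e = (2^i + 1)·2^t, and F = GaloisField 2 k. Define V : F × F → F × F by V(x,y) = ((x + y)^e + x^e, (x + y)^e + y^e). Then V is a bijection of F × F. -/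
/-!
Write `f x = x ^ (q + 1)` with `q = 2 ^ i`. Since `e = (q + 1) * 2 ^ t`, the butterfly of exponent
`e` is the one of exponent `q + 1` followed by the bijective Frobenius power `z ↦ z ^ 2 ^ t`.
For `u = x + a`, `v = y + b`, the butterfly takes the same value at `(x, y)` and `(u, v)` iff the
derivatives `C = f (x + a) + f x = f (y + b) + f y = f (x + y + a + b) + f (x + y)` agree.
As `f` is injective, `C = 0` forces `a = b = 0`. Otherwise `a`, `b`, `a + b` are nonzero, and
eliminating `x ^ q, y ^ q`, resp. `x, y`, from these `𝔽₂`-affine equations gives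
`λ z = C M` and `λ z ^ q = C M ^ q` with `λ = a ^ q b + a b ^ q`, `z = a y + b x` and
`M = a² + a b + b²`. Comparing the second with the Frobenius image of the first gives
`(C / λ) ^ q = C / λ`, hence `C = λ`, and then `w = (x + b) / a` solves `w ^ q + w = 1`.
In `𝔽_{2^k}` with `gcd(i, k) = 1` the fixed points of `w ↦ w ^ q` are `0` and `1` (periodic
points of squaring of periods `i` and `k`), so when moreover `k` is odd `w ^ q + w = 1`, which
implies `w ^ q² = w`, has no solution; the case `q = 2` of the latter gives `M ≠ 0`.
-/

open Function

section FiniteField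

variable {F : Type*} [Field F] [Finite F] {k : ℕ}

theorem eq_zero_or_one_of_pow_two_pow_eq_self_s11 (hF : Nat.card F = 2 ^ k) {m : ℕ}
    (hm : m.Coprime k) {w : F} (hw : w ^ 2 ^ m = w) : w = 0 ∨ w = 1 := by
  have : Fintype F := Fintype.ofFinite F
  have hperiodic (n : ℕ) (h : w ^ 2 ^ n = w) : IsPeriodicPt (· ^ 2) n w := by
    rw [IsPeriodicPt, IsFixedPt, pow_iterate]; exact h
  have hk : w ^ 2 ^ k = w := by
    rw [← hF, Nat.card_eq_fintype_card, FiniteField.pow_card]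
  have hsq : w ^ 2 = w := by
    simpa [IsPeriodicPt, IsFixedPt, hm] using (hperiodic m hw).gcd (hperiodic k hk)
  have : w * (w - 1) = 0 := by linear_combination hsq
  simpa [sub_eq_zero] using this

theorem pow_two_pow_add_self_ne_one [CharP F 2] (hF : Nat.card F = 2 ^ k) {m : ℕ}
    (hm : (2 * m).Coprime k) (w : F) : w ^ 2 ^ m + w ≠ 1 := by
  intro h
  have hw : w ^ 2 ^ m = 1 + w := CharTwo.add_eq_iff_eq_add.mp h
  have hfix : w ^ 2 ^ (2 * m) = w := by
    rw [pow_mul', sq, pow_mul, hw, add_pow_char_pow, hw, one_pow, CharTwo.add_cancel_left]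
  rcases eq_zero_or_one_of_pow_two_pow_eq_self_s11 hF hm hfix with rfl | rfl <;> simp at h

end FiniteField

section Gold

variable {K : Type*} [Field K] {q : ℕ}

theorem pow_mul_add_mul_pow_ne_pow_succ (hq : ∀ w : K, w ^ q + w ≠ 1) {a : K} (ha : a ≠ 0)
    (x : K) : a ^ q * x + a * x ^ q ≠ a ^ (q + 1) := by
  intro h
  apply hq (x / a)
  rw [div_pow, div_add_div _ _ (pow_ne_zero q ha) ha, div_eq_one_iff_eq (by positivity)]
  linear_combination h

theorem add_pow_succ_of_additive {R : Type*} [CommSemiring R]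
    (hadd : ∀ x y : R, (x + y) ^ q = x ^ q + y ^ q) (x y : R) :
    (x + y) ^ (q + 1) = x ^ (q + 1) + y ^ (q + 1) + (x ^ q * y + x * y ^ q) := by
  rw [pow_succ, hadd]; ring

theorem pow_succ_injective_of_additive [CharP K 2]
    (hadd : ∀ x y : K, (x + y) ^ q = x ^ q + y ^ q) (hq : ∀ w : K, w ^ q + w ≠ 1) :
    Injective fun x : K ↦ x ^ (q + 1) := by
  intro x u h
  by_contra hxu
  apply pow_mul_add_mul_pow_ne_pow_succ hq (sub_ne_zero.mpr (Ne.symm hxu)) x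
  have := add_pow_succ_of_additive hadd x (u - x)
  simp only [add_sub_cancel, ← h] at this
  linear_combination (norm := ring_nf) this
  reduce_mod_char!

theorem eq_zero_or_eq_of_pow_mul_eq_pow_mul (hfix : ∀ w : K, w ^ q = w → w = 0 ∨ w = 1)
    {c l : K} (hl : l ≠ 0) (h : c ^ q * l = l ^ q * c) : c = 0 ∨ c = l := by
  have := hfix (c / l) (by rw [div_pow, div_eq_div_iff (pow_ne_zero q hl) hl, h, mul_comm])
  simpa [div_eq_iff hl] using this

theorem false_of_gold_derivative_system [CharP K 2]
    (hadd : ∀ x y : K, (x + y) ^ q = x ^ q + y ^ q) (hq : ∀ w : K, w ^ q + w ≠ 1)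
    (hfix : ∀ w : K, w ^ q = w → w = 0 ∨ w = 1) (hsq : ∀ w : K, w ^ 2 + w ≠ 1)
    {a b x y C : K} (ha : a ≠ 0) (hb : b ≠ 0) (hab : a ≠ b)
    (h₁ : C = a ^ (q + 1) + (a ^ q * x + a * x ^ q))
    (h₂ : C = b ^ (q + 1) + (b ^ q * y + b * y ^ q))
    (h₃ : C = (a ^ q * b + a * b ^ q) + (b ^ q * x + b * x ^ q) + (a ^ q * y + a * y ^ q)) :
    False := by
  have hl : a ^ q * b + a * b ^ q ≠ 0 := by
    intro h
    have : b ^ q * a = a ^ q * b := by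
      linear_combination (norm := ring_nf) h
      reduce_mod_char!
    rcases eq_zero_or_eq_of_pow_mul_eq_pow_mul hfix ha this with h | h
    exacts [hb h, hab h.symm]
  have hM : a ^ 2 + a * b + b ^ 2 ≠ 0 := by
    intro h
    apply pow_mul_add_mul_pow_ne_pow_succ hsq ha b
    linear_combination (norm := ring_nf) a * h
    reduce_mod_char!
  have hz : (a ^ q * b + a * b ^ q) * (a * y + b * x) = C * (a ^ 2 + a * b + b ^ 2) := by
    linear_combination (norm := ring_nf) b ^ 2 * h₁ + a ^ 2 * h₂ + a * b * h₃
    reduce_mod_char!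
  have hzq : (a ^ q * b + a * b ^ q) * (a * y + b * x) ^ q
      = C * (a ^ 2 + a * b + b ^ 2) ^ q := by
    simp only [hadd, mul_pow]
    linear_combination (norm := ring_nf) (b ^ q) ^ 2 * h₁ + (a ^ q) ^ 2 * h₂ + a ^ q * b ^ q * h₃
    reduce_mod_char!
  have hlC : C ^ q * (a ^ q * b + a * b ^ q) = (a ^ q * b + a * b ^ q) ^ q * C := by
    refine mul_right_cancel₀ (pow_ne_zero q hM) ?_
    have hzFrob := congrArg (· ^ q) hz
    simp only [mul_pow] at hzFrob
    linear_combination (a ^ q * b + a * b ^ q) ^ q * hzq - (a ^ q * b + a * b ^ q) * hzFrob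
  rcases eq_zero_or_eq_of_pow_mul_eq_pow_mul hfix hl hlC with rfl | rfl
  · apply pow_mul_add_mul_pow_ne_pow_succ hq ha x
    linear_combination (norm := ring_nf) h₁
    reduce_mod_char!
  · apply pow_mul_add_mul_pow_ne_pow_succ hq ha (x + b)
    rw [hadd]
    linear_combination (norm := ring_nf) h₁
    reduce_mod_char!

theorem add_pow_succ_add_pow_succ_eq_zero_iff [CharP K 2]
    (hadd : ∀ x y : K, (x + y) ^ q = x ^ q + y ^ q) (hq : ∀ w : K, w ^ q + w ≠ 1) {x a : K} :
    (x + a) ^ (q + 1) + x ^ (q + 1) = 0 ↔ a = 0 := by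
  rw [CharTwo.add_eq_zero, (pow_succ_injective_of_additive hadd hq).eq_iff, add_eq_left]

theorem eq_zero_of_gold_derivatives_eq [CharP K 2]
    (hadd : ∀ x y : K, (x + y) ^ q = x ^ q + y ^ q) (hq : ∀ w : K, w ^ q + w ≠ 1)
    (hfix : ∀ w : K, w ^ q = w → w = 0 ∨ w = 1) (hsq : ∀ w : K, w ^ 2 + w ≠ 1) {a b x y : K}
    (h₁ : (x + a) ^ (q + 1) + x ^ (q + 1) = (y + b) ^ (q + 1) + y ^ (q + 1))
    (h₂ : (x + a) ^ (q + 1) + x ^ (q + 1) = (x + y + (a + b)) ^ (q + 1) + (x + y) ^ (q + 1)) :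
    a = 0 ∧ b = 0 := by
  have hzero {z c : K} := add_pow_succ_add_pow_succ_eq_zero_iff hadd hq (x := z) (a := c)
  by_contra hne
  have hC : (x + a) ^ (q + 1) + x ^ (q + 1) ≠ 0 := fun hC ↦
    hne ⟨hzero.mp hC, hzero.mp (h₁ ▸ hC)⟩
  have ha : a ≠ 0 := fun h ↦ hC (hzero.mpr h)
  have hb : b ≠ 0 := fun h ↦ hC (h₁ ▸ hzero.mpr h)
  have hab : a ≠ b := fun h ↦ hC (h₂ ▸ hzero.mpr (by rw [h, CharTwo.add_self_eq_zero]))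
  have ex := add_pow_succ_of_additive hadd x a
  have ey := add_pow_succ_of_additive hadd y b
  have exy := add_pow_succ_of_additive hadd (x + y) (a + b)
  have eab := add_pow_succ_of_additive hadd a b
  rw [hadd x y, hadd a b] at exy
  refine false_of_gold_derivative_system hadd hq hfix hsq ha hb hab (x := x) (y := y)
    (C := (x + a) ^ (q + 1) + x ^ (q + 1)) ?_ ?_ ?_
  · linear_combination (norm := ring_nf) ex
    reduce_mod_char!
  · linear_combination (norm := ring_nf) h₁ + ey
    reduce_mod_char!
  · linear_combination (norm := ring_nf) h₂ + exy + eab + ex + ey + h₁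
    reduce_mod_char!

end Gold

def closedButterfly (K : Type*) [CommRing K] (e : ℕ) (p : K × K) : K × K :=
  ((p.1 + p.2) ^ e + p.1 ^ e, (p.1 + p.2) ^ e + p.2 ^ e)

theorem closedButterfly_injective {K : Type*} [Field K] [CharP K 2] {q : ℕ}
    (hadd : ∀ x y : K, (x + y) ^ q = x ^ q + y ^ q) (hq : ∀ w : K, w ^ q + w ≠ 1)
    (hfix : ∀ w : K, w ^ q = w → w = 0 ∨ w = 1) (hsq : ∀ w : K, w ^ 2 + w ≠ 1) :
    Injective (closedButterfly K (q + 1)) := by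
  rintro ⟨x, y⟩ ⟨u, v⟩ h
  obtain ⟨a, rfl⟩ : ∃ a, u = x + a := ⟨u - x, by ring⟩
  obtain ⟨b, rfl⟩ : ∃ b, v = y + b := ⟨v - y, by ring⟩
  simp only [closedButterfly, Prod.mk.injEq] at h
  obtain ⟨rfl, rfl⟩ := eq_zero_of_gold_derivatives_eq hadd hq hfix hsq
    (a := a) (b := b) (x := x) (y := y)
    (by linear_combination (norm := ring_nf) h.2 - h.1
        reduce_mod_char!)
    (by linear_combination (norm := ring_nf) h.1
        reduce_mod_char!)
  simp

theorem closedButterfly_mul_two_pow {K : Type*} [CommRing K] [CharP K 2] (e t : ℕ) :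
    closedButterfly K (e * 2 ^ t) = Prod.map (· ^ 2 ^ t) (· ^ 2 ^ t) ∘ closedButterfly K e := by
  ext p <;> simp [closedButterfly, pow_mul, add_pow_char_pow]

theorem closedButterfly_trivial_coeff_bijective_general (k i t : ℕ) (hk : Odd k)
    (hgcd : Nat.gcd i k = 1) :
    Function.Bijective (fun p : GaloisField 2 k × GaloisField 2 k =>
      ((p.1 + p.2) ^ ((2 ^ i + 1) * 2 ^ t) + p.1 ^ ((2 ^ i + 1) * 2 ^ t),
       (p.1 + p.2) ^ ((2 ^ i + 1) * 2 ^ t) + p.2 ^ ((2 ^ i + 1) * 2 ^ t))) := by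
  have hF : Nat.card (GaloisField 2 k) = 2 ^ k := GaloisField.card 2 k hk.pos.ne'
  have hodd : Nat.Coprime 2 k := Nat.coprime_two_left.mpr hk
  have hgold : Injective (closedButterfly (GaloisField 2 k) (2 ^ i + 1)) :=
    closedButterfly_injective (fun x y ↦ add_pow_char_pow x y 2 i)
      (pow_two_pow_add_self_ne_one hF (hodd.mul_left hgcd))
      (fun _ ↦ eq_zero_or_one_of_pow_two_pow_eq_self_s11 hF hgcd)
      (by simpa using pow_two_pow_add_self_ne_one hF (m := 1) (by simpa using hodd))
  have hfrob : Injective fun z : GaloisField 2 k ↦ z ^ 2 ^ t :=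
    (iterateFrobenius (GaloisField 2 k) 2 t).injective
  rw [← Finite.injective_iff_bijective]
  change Injective (closedButterfly _ ((2 ^ i + 1) * 2 ^ t))
  rw [closedButterfly_mul_two_pow]
  exact (hfrob.prodMap hfrob).comp hgold

/-- Theorem 4.1: for `k` odd, `gcd(i,k) = 1` and `e = (2^i+1)·2^t`, the closed butterfly
with trivial coefficient `α = 1`, `V(x,y) = ((x+y)^e + x^e, (x+y)^e + y^e)`, is a
bijection of `GaloisField 2 k × GaloisField 2 k`. -/
theorem closedButterfly_trivial_coeff_bijective (k i t : ℕ) (hk : Odd k) (hkpos : 0 < k)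
    (hipos : 0 < i) (hgcd : Nat.gcd i k = 1) (ht : t ≤ k - 1) :
    Function.Bijective (fun p : GaloisField 2 k × GaloisField 2 k =>
      ((p.1 + p.2) ^ ((2 ^ i + 1) * 2 ^ t) + p.1 ^ ((2 ^ i + 1) * 2 ^ t),
       (p.1 + p.2) ^ ((2 ^ i + 1) * 2 ^ t) + p.2 ^ ((2 ^ i + 1) * 2 ^ t))) :=
  closedButterfly_trivial_coeff_bijective_general k i t hk hgcd
end

section
/- Let k be an odd positive integer, i a positive integer with 1 ≤ i < k and gcd(i,k) = 1, and F = GaloisField 2 k. Then for any (c,d) ∈ F × F with (c,d) ≠ (0,0), the number of pairs (u,v) ∈ F × F satisfying the system: (1) d·u^(2^i) + (d·u)^(2^(k−i)) + (c+d)·v^(2^i) + ((c+d)·v)^(2^(k−i)) = 0 and (2) (c+d)·u^(2^i) + ((c+d)·u)^(2^(k−i)) + c·v^(2^i) + (c·v)^(2^(k−i)) = 0 is exactly 4. -/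
/-!
Identify `F × F` with the quadratic extension `K = F(ω)`, `ω² + ω + 1 = 0`, via
`(u, v) ↦ u + v ω`; this is a field because `k` is odd, so `F` has no primitive cube root
of unity. Multiplication by `w = d + (c + d) ω` is the coefficient matrix of the system, and
after raising both equations to the power `2^i` the system becomes the single equation
`w^σ z^(4^i) = w z` in `K`, where `σ = 4^(i(k+1)/2)` acts as `x ↦ x^(2^i)` on `F` and
fixes `ω`. Its nonzero solutions satisfy `z^(4^i - 1) = w^(1 - σ)`. As `3 ∣ σ - 1` the right
side is a cube, hence a `(4^i - 1)`-th power, because in the cyclic group `Kˣ` of order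
`4^k - 1` we have `gcd(4^k - 1, 4^i - 1) = 4^gcd(k,i) - 1 = 3`; so these solutions form a coset
of the three cube roots of unity, and with `z = 0` there are 4 solutions.
-/

open Polynomial

theorem Nat.coprime_three_two_pow_sub_one {k : ℕ} (hk : Odd k) : Nat.Coprime 3 (2 ^ k - 1) := by
  have h := Nat.pow_sub_one_gcd_pow_sub_one 2 2 k
  rwa [Nat.coprime_comm.mp hk.coprime_two_right, pow_one] at h

section RootsOfUnity

theorem exists_pow_eq_pow_gcd {G : Type*} [Group G] {x : G} {n : ℕ} (hx : x ^ n = 1) (d : ℕ) :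
    ∃ y : G, y ^ d = x ^ n.gcd d := by
  refine ⟨x ^ n.gcdB d, ?_⟩
  rw [← zpow_natCast, ← zpow_natCast x, Nat.gcd_eq_gcd_ab, zpow_add, zpow_mul, zpow_mul,
    zpow_natCast x n, hx, one_zpow, one_mul, ← zpow_mul, ← zpow_mul, mul_comm]

variable {K : Type*} [Field K] [Finite K]

theorem ncard_pow_succ_eq_self (d : ℕ) :
    {x : K | x ^ (d + 1) = x}.ncard = (Nat.card K - 1).gcd d + 1 := by
  have hset : {x : K | x ^ (d + 1) = x} =
      insert 0 (Units.val '' ((powMonoidHom d : Kˣ →* Kˣ).ker : Set Kˣ)) := by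
    ext x
    rcases eq_or_ne x 0 with rfl | hx
    · simp
    · rw [Set.mem_ofPred_eq, pow_succ, mul_eq_right₀ hx, Set.mem_insert_iff, or_iff_right hx]
      exact ⟨fun h => ⟨Units.mk0 x hx, Units.ext h, rfl⟩,
        fun ⟨u, hu, hux⟩ => hux ▸ congrArg Units.val hu⟩
  rw [hset, Set.ncard_insert_of_notMem (by simp),
    Set.ncard_image_of_injective _ Units.val_injective, ← Nat.card_coe_set_eq,
    SetLike.coe_sort_coe, IsCyclic.card_powMonoidHom_ker, Nat.card_units]

theorem ncard_pow_mul_pow_succ_eq_self {y : K} (hy : y ≠ 0) (d : ℕ) :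
    {z : K | y ^ d * z ^ (d + 1) = z}.ncard = (Nat.card K - 1).gcd d + 1 := by
  have : {z : K | y ^ d * z ^ (d + 1) = z} = (y * ·) ⁻¹' {x | x ^ (d + 1) = x} := by
    ext z
    rw [Set.mem_preimage, Set.mem_ofPred_eq, Set.mem_ofPred_eq, ← mul_right_inj' hy,
      show y * (y ^ d * z ^ (d + 1)) = (y * z) ^ (d + 1) by ring]
  rw [this, Set.ncard_preimage_of_injective_subset_range (mul_right_injective₀ hy)
    (fun x _ => ⟨y⁻¹ * x, mul_inv_cancel_left₀ hy x⟩), ncard_pow_succ_eq_self]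

theorem ncard_pow_mul_pow_succ_eq_mul {w : K} (hw : w ≠ 0) {d e : ℕ}
    (he : (Nat.card K - 1).gcd d ∣ e) :
    {z : K | w ^ (e + 1) * z ^ (d + 1) = w * z}.ncard = (Nat.card K - 1).gcd d + 1 := by
  obtain ⟨t, rfl⟩ := he
  obtain ⟨y, hy⟩ :=
    exists_pow_eq_pow_gcd (pow_card_eq_one' (x := Units.mk0 (w ^ t) (pow_ne_zero t hw))) d
  rw [Nat.card_units] at hy
  have hy' : (y : K) ^ d = w ^ ((Nat.card K - 1).gcd d * t) := by
    rw [mul_comm, pow_mul]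
    simpa using congrArg Units.val hy
  rw [← ncard_pow_mul_pow_succ_eq_self y.ne_zero d, hy']
  congr 1
  ext z
  rw [Set.mem_ofPred_eq, Set.mem_ofPred_eq, pow_succ', mul_assoc, mul_right_inj' hw]

theorem ncard_pow_mul_pow_four_pow_eq_mul {k i : ℕ} (hK : Nat.card K = 4 ^ k)
    (hgcd : Nat.gcd i k = 1) (m : ℕ) {w : K} (hw : w ≠ 0) :
    {z : K | w ^ 4 ^ (i * m) * z ^ 4 ^ i = w * z}.ncard = 4 := by
  have hgcd' : (Nat.card K - 1).gcd (4 ^ i - 1) = 3 := by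
    rw [hK, Nat.pow_sub_one_gcd_pow_sub_one, Nat.gcd_comm, hgcd, pow_one]
  have hpos (n : ℕ) : 1 ≤ 4 ^ n := Nat.one_le_pow _ _ (by norm_num)
  have hcube : 3 ∣ 4 ^ (i * m) - 1 := by simpa using Nat.sub_dvd_pow_sub_pow 4 1 (i * m)
  rw [← Nat.sub_add_cancel (hpos (i * m)), ← Nat.sub_add_cancel (hpos i),
    ncard_pow_mul_pow_succ_eq_mul hw (hgcd' ▸ hcube), hgcd']

end RootsOfUnity

abbrev CubeRootExt (F : Type*) [Field F] := AdjoinRoot (X ^ 2 + X + 1 : F[X])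

namespace CubeRootExt

variable {F : Type*} [Field F]

theorem monic_X_sq_add_X_add_one : (X ^ 2 + X + 1 : F[X]).Monic := by monicity!

theorem natDegree_X_sq_add_X_add_one : (X ^ 2 + X + 1 : F[X]).natDegree = 2 := by
  compute_degree!

theorem irreducible_X_sq_add_X_add_one (h : ∀ x : F, x ^ 2 + x + 1 ≠ 0) :
    Irreducible (X ^ 2 + X + 1 : F[X]) := by
  refine irreducible_of_degree_le_three_of_not_isRoot ?_ fun x hx => h x ?_
  · rw [natDegree_X_sq_add_X_add_one]
    decide
  · simpa using hx

noncomputable def ω : CubeRootExt F := AdjoinRoot.root _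

theorem ω_sq_add_ω_add_one : (ω : CubeRootExt F) ^ 2 + ω + 1 = 0 := by
  have h := AdjoinRoot.eval₂_root (X ^ 2 + X + 1 : F[X])
  simp only [eval₂_add, eval₂_pow, eval₂_X, eval₂_one] at h
  exact h

theorem ω_pow_four_pow (n : ℕ) : (ω : CubeRootExt F) ^ 4 ^ n = ω := by
  have h3 : (ω : CubeRootExt F) ^ 3 = 1 := by
    linear_combination (ω - 1) * ω_sq_add_ω_add_one (F := F)
  rw [pow_eq_pow_mod _ h3, Nat.pow_mod]
  norm_num

noncomputable def ofPair (p : F × F) : CubeRootExt F :=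
  algebraMap F _ p.1 + algebraMap F _ p.2 * ω

theorem ofPair_mul [CharP F 2] (a b x y : F) :
    ofPair (a, b) * ofPair (x, y) = ofPair (a * x + b * y, a * y + b * x + b * y) := by
  have h2 : (2 : CubeRootExt F) = 0 := by
    rw [← map_ofNat (algebraMap F (CubeRootExt F)) 2, CharTwo.two_eq_zero (R := F), map_zero]
  simp only [ofPair, map_add, map_mul]
  linear_combination
    (algebraMap F _ b * algebraMap F _ y) * (ω_sq_add_ω_add_one (F := F) - (ω + 1) * h2)

variable [Fact (Irreducible (X ^ 2 + X + 1 : F[X]))]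

instance [CharP F 2] : CharP (CubeRootExt F) 2 :=
  charP_of_injective_algebraMap (algebraMap F _).injective 2

instance [Finite F] : Finite (CubeRootExt F) :=
  have : Module.Finite F (CubeRootExt F) := monic_X_sq_add_X_add_one.finite_adjoinRoot
  Module.finite_of_finite F

theorem ofPair_pow_four_pow [CharP F 2] (a b : F) (n : ℕ) :
    ofPair (a, b) ^ 4 ^ n = ofPair (a ^ 4 ^ n, b ^ 4 ^ n) := by
  have h4 : 4 ^ n = 2 ^ (2 * n) := by rw [pow_mul]; norm_num
  simp only [ofPair]
  rw [h4, add_pow_char_pow, mul_pow, map_pow, map_pow, ← h4, ω_pow_four_pow]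

theorem ω_notMem_range : (ω : CubeRootExt F) ∉ Set.range (algebraMap F _) := by
  rintro ⟨r, hr⟩
  have hroot : (X ^ 2 + X + 1 : F[X]).IsRoot r := by
    rw [IsRoot.def, ← map_eq_zero (algebraMap F (CubeRootExt F))]
    simp only [eval_add, eval_pow, eval_X, eval_one, map_add, map_pow, map_one, hr]
    exact ω_sq_add_ω_add_one
  have := degree_eq_one_of_irreducible_of_root Fact.out hroot
  rw [degree_eq_natDegree monic_X_sq_add_X_add_one.ne_zero, natDegree_X_sq_add_X_add_one] at this
  exact absurd this (by decide)

theorem ofPair_injective : Function.Injective (ofPair : F × F → CubeRootExt F) := by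
  rintro ⟨a, b⟩ ⟨a', b'⟩ h
  simp only [ofPair] at h
  obtain rfl : b = b' := by
    by_contra hb
    refine ω_notMem_range ⟨(a - a') / (b' - b), ?_⟩
    rw [map_div₀, div_eq_iff (by rwa [Ne, map_eq_zero, sub_eq_zero, eq_comm]), map_sub, map_sub]
    linear_combination h
  exact Prod.ext ((algebraMap F _).injective (add_right_cancel h)) rfl

theorem ofPair_eq_zero_iff {p : F × F} : ofPair p = 0 ↔ p = 0 := by
  rw [show (0 : CubeRootExt F) = ofPair 0 by simp [ofPair], ofPair_injective.eq_iff]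

theorem natCard_eq [Finite F] : Nat.card (CubeRootExt F) = Nat.card F ^ 2 := by
  have : Module.Finite F (CubeRootExt F) := monic_X_sq_add_X_add_one.finite_adjoinRoot
  rw [Module.natCard_eq_pow_finrank (K := F),
    (AdjoinRoot.powerBasis monic_X_sq_add_X_add_one.ne_zero).finrank,
    AdjoinRoot.powerBasis_dim, natDegree_X_sq_add_X_add_one]

theorem ofPair_surjective [Finite F] : Function.Surjective (ofPair : F × F → CubeRootExt F) :=
  (ofPair_injective.bijective_of_nat_card_le (by rw [natCard_eq, Nat.card_prod, sq])).2

end CubeRootExt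

section FiniteFieldCharTwo

variable {F : Type*} [Field F] [Fintype F] {k : ℕ}

theorem sq_add_self_add_one_ne_zero [CharP F 2] (hF : Nat.Coprime 3 (Fintype.card F - 1))
    (x : F) : x ^ 2 + x + 1 ≠ 0 := by
  intro hx
  have hx0 : x ≠ 0 := by rintro rfl; simp at hx
  have hx3 : x ^ 3 = 1 := by linear_combination (x - 1) * hx
  obtain rfl : x = 1 := by
    simpa [hF.gcd_eq_one] using
      pow_gcd_eq_one.mpr ⟨hx3, FiniteField.pow_card_sub_one_eq_one x hx0⟩
  have h2 : (2 : F) = 0 := CharTwo.two_eq_zero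
  exact one_ne_zero (by linear_combination hx - h2 : (1 : F) = 0)

theorem pow_four_pow_eq_pow_two_pow (hF : Fintype.card F = 2 ^ k) {m : ℕ} (hm : k + 1 = 2 * m)
    (i : ℕ) (x : F) : x ^ 4 ^ (i * m) = x ^ 2 ^ i := by
  have he : (4 : ℕ) ^ (i * m) = (2 ^ k) ^ i * 2 ^ i := by
    rw [← pow_mul, ← pow_add, show (4 : ℕ) = 2 ^ 2 by rfl, ← pow_mul, mul_left_comm, ← hm]
    ring
  rw [he, pow_mul, ← hF, FiniteField.pow_card_pow]

theorem add_pow_two_pow_sub_eq_zero_iff [CharP F 2] (hF : Fintype.card F = 2 ^ k) {i : ℕ}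
    (hik : i ≤ k) {a b : F} : a + b ^ 2 ^ (k - i) = 0 ↔ a ^ 2 ^ i = b := by
  have hpow (x : F) : x ^ 2 ^ k = x := hF ▸ FiniteField.pow_card x
  rw [CharTwo.add_eq_zero]
  constructor
  · rintro rfl
    rw [← pow_mul, ← pow_add, Nat.sub_add_cancel hik, hpow]
  · rintro rfl
    rw [← pow_mul, ← pow_add, Nat.add_sub_cancel' hik, hpow]

theorem twisted_linear_eq_zero_iff [CharP F 2] (hF : Fintype.card F = 2 ^ k) {i : ℕ}
    (hik : i ≤ k) (a b u v : F) :
    a * u ^ 2 ^ i + (a * u) ^ 2 ^ (k - i) + b * v ^ 2 ^ i + (b * v) ^ 2 ^ (k - i) = 0 ↔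
      a ^ 2 ^ i * u ^ 4 ^ i + b ^ 2 ^ i * v ^ 4 ^ i = a * u + b * v := by
  have h4 : (4 : ℕ) ^ i = 2 ^ i * 2 ^ i := by rw [← mul_pow]; rfl
  rw [show a * u ^ 2 ^ i + (a * u) ^ 2 ^ (k - i) + b * v ^ 2 ^ i + (b * v) ^ 2 ^ (k - i) =
      (a * u ^ 2 ^ i + b * v ^ 2 ^ i) + (a * u + b * v) ^ 2 ^ (k - i) by
        rw [add_pow_char_pow]; ring,
    add_pow_two_pow_sub_eq_zero_iff hF hik, add_pow_char_pow, mul_pow, mul_pow, ← pow_mul,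
    ← pow_mul, h4]

theorem system_iff_ofPair_eq [CharP F 2] [Fact (Irreducible (X ^ 2 + X + 1 : F[X]))] {i m : ℕ}
    (hF : Fintype.card F = 2 ^ k) (hik : i ≤ k) (hm : k + 1 = 2 * m) (c d u v : F) :
    (d * u ^ 2 ^ i + (d * u) ^ 2 ^ (k - i)
          + (c + d) * v ^ 2 ^ i + ((c + d) * v) ^ 2 ^ (k - i) = 0 ∧
      (c + d) * u ^ 2 ^ i + ((c + d) * u) ^ 2 ^ (k - i)
          + c * v ^ 2 ^ i + (c * v) ^ 2 ^ (k - i) = 0) ↔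
    CubeRootExt.ofPair (d, c + d) ^ 4 ^ (i * m) * CubeRootExt.ofPair (u, v) ^ 4 ^ i =
      CubeRootExt.ofPair (d, c + d) * CubeRootExt.ofPair (u, v) := by
  have h2 : (2 : F) = 0 := CharTwo.two_eq_zero
  simp only [twisted_linear_eq_zero_iff hF hik, CubeRootExt.ofPair_pow_four_pow,
    pow_four_pow_eq_pow_two_pow hF hm, CubeRootExt.ofPair_mul,
    CubeRootExt.ofPair_injective.eq_iff, Prod.mk.injEq, add_pow_char_pow]
  refine and_congr_right fun _ => ⟨fun h => ?_, fun h => ?_⟩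
  · linear_combination h + (d ^ 2 ^ i * v ^ 4 ^ i - d * v) * h2
  · linear_combination h - (d ^ 2 ^ i * v ^ 4 ^ i - d * v) * h2

end FiniteFieldCharTwo

theorem trivial_coeff_radical_exactly_four_solutions_general (k i : ℕ) (hk : Odd k)
    (hik : i < k) (hgcd : Nat.gcd i k = 1)
    (c d : GaloisField 2 k) (hcd : (c, d) ≠ (0, 0)) :
    Set.ncard {p : GaloisField 2 k × GaloisField 2 k |
      d * p.1 ^ 2 ^ i + (d * p.1) ^ 2 ^ (k - i)
          + (c + d) * p.2 ^ 2 ^ i + ((c + d) * p.2) ^ 2 ^ (k - i) = 0 ∧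
      (c + d) * p.1 ^ 2 ^ i + ((c + d) * p.1) ^ 2 ^ (k - i)
          + c * p.2 ^ 2 ^ i + (c * p.2) ^ 2 ^ (k - i) = 0} = 4 := by
  have : Fintype (GaloisField 2 k) := Fintype.ofFinite _
  have hF : Fintype.card (GaloisField 2 k) = 2 ^ k := by
    rw [Fintype.card_eq_nat_card, GaloisField.card 2 k (by rintro rfl; simp at hk)]
  have : Fact (Irreducible (X ^ 2 + X + 1 : (GaloisField 2 k)[X])) :=
    ⟨CubeRootExt.irreducible_X_sq_add_X_add_one <| sq_add_self_add_one_ne_zero <|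
      hF ▸ Nat.coprime_three_two_pow_sub_one hk⟩
  have hK : Nat.card (CubeRootExt (GaloisField 2 k)) = 4 ^ k := by
    rw [CubeRootExt.natCard_eq, Nat.card_eq_fintype_card, hF, ← pow_mul, pow_mul']
    rfl
  have hw : CubeRootExt.ofPair (d, c + d) ≠ 0 := by
    rw [Ne, CubeRootExt.ofPair_eq_zero_iff, Prod.mk_eq_zero]
    rintro ⟨rfl, hc⟩
    exact hcd (by rw [← hc, add_zero])
  obtain ⟨m, hm⟩ : ∃ m, k + 1 = 2 * m := hk.add_one.exists_two_nsmul _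
  rw [← ncard_pow_mul_pow_four_pow_eq_mul hK hgcd m hw,
    ← Set.ncard_preimage_of_injective_subset_range CubeRootExt.ofPair_injective
      (by simp [CubeRootExt.ofPair_surjective.range_eq])]
  congr 1
  ext ⟨u, v⟩
  exact system_iff_ofPair_eq hF hik.le hm c d u v

/-- Lemma 4.4: for `k` odd, `1 ≤ i < k`, `gcd(i,k) = 1` and `(c,d) ≠ (0,0)`, the
linearized system in `(u,v)` has exactly 4 solutions over `GaloisField 2 k × GaloisField 2 k`. -/
theorem trivial_coeff_radical_exactly_four_solutions (k i : ℕ) (hk : Odd k)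
    (hipos : 1 ≤ i) (hik : i < k) (hgcd : Nat.gcd i k = 1)
    (c d : GaloisField 2 k) (hcd : (c, d) ≠ (0, 0)) :
    Set.ncard {p : GaloisField 2 k × GaloisField 2 k |
      d * p.1 ^ 2 ^ i + (d * p.1) ^ 2 ^ (k - i)
          + (c + d) * p.2 ^ 2 ^ i + ((c + d) * p.2) ^ 2 ^ (k - i) = 0 ∧
      (c + d) * p.1 ^ 2 ^ i + ((c + d) * p.1) ^ 2 ^ (k - i)
          + c * p.2 ^ 2 ^ i + (c * p.2) ^ 2 ^ (k - i) = 0} = 4 :=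
  trivial_coeff_radical_exactly_four_solutions_general k i hk hik hgcd c d hcd
end

section
/- Let k be an odd positive integer with k ≥ 3, i a positive integer with gcd(i,k) = 1, t a natural number with 0 ≤ t ≤ k−1, e = (2^i + 1)·2^t, and F = GaloisField 2 k. Define V : F × F → F × F by V(x,y) = ((x + y)^e + x^e, (x + y)^e + y^e), with components V₁, V₂, and for a, b, c, d ∈ F let W((a,b),(c,d)) = Σ_{x,y ∈ F} χ(Tr(c·V₁(x,y) + d·V₂(x,y) + a·x + b·y)). Then the maximum of |W((a,b),(c,d))| over all a, b ∈ F and (c,d) ≠ (0,0) equals 2^(k+1); equivalently, the nonlinearity of V, namely 2^(2k−1) − (1/2)·max |W|, equals 2^(2k−1) − 2^k. -/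
noncomputable instance (k : ℕ) : Fintype (GaloisField 2 k) := Fintype.ofFinite _

/-- The absolute trace `Tr(x) = x + x^2 + ⋯ + x^(2^(k-1))` of `GaloisField 2 k`,
computed inside the field (its values lie in the prime subfield `{0, 1}`). -/
noncomputable def absTrace (k : ℕ) (x : GaloisField 2 k) : GaloisField 2 k :=
  ∑ j ∈ Finset.range k, x ^ 2 ^ j

/-- The Walsh transform `W((a,b),(c,d)) = Σ_{x,y} χ(Tr(c·V₁(x,y) + d·V₂(x,y) + ax + by))`
of the closed butterfly with trivial coefficient,
`V(x,y) = ((x+y)^e + x^e, (x+y)^e + y^e)`, where `χ(0) = 1` and `χ(1) = -1`. -/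
noncomputable def butterflyWalshOne (k e : ℕ) (a b c d : GaloisField 2 k) : ℤ :=
  haveI := Classical.decEq (GaloisField 2 k)
  ∑ x : GaloisField 2 k, ∑ y : GaloisField 2 k,
    if absTrace k (c * ((x + y) ^ e + x ^ e) + d * ((x + y) ^ e + y ^ e)
        + a * x + b * y) = 0 then 1 else -1

/-!
Write `σ = 2 ^ i`. Over `𝔽₂`, `z ↦ Tr(c V₁ z + d V₂ z + a z₁ + b z₂)` is a quadratic function whose
quadratic part is `Tr((z^σ)ᵀ N z)` with `N = [[d, c + d], [c + d, c]]`. The square of the Walsh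
coefficient of a quadratic function is `|F²|` times a signed count of the radical of its polar
form. For `(c, d) ≠ 0` that radical is the solution set of the twisted system `N^σ z^(σ²) = N z`,
where `det N = c² + cd + d²` does not vanish because `k` is odd. Since `gcd(2i, k) = 1`, the map
`x ↦ x^(σ²)` fixes only `𝔽₂`, so every ratio of two `2 × 2` determinants of solutions lies in `𝔽₂`,
and there are at most four solutions. For `a = b = c = d = 1` the radical is exactly `𝔽₂²` and the
quadratic function vanishes on it, so the bound `2^(k+1)` is attained. The factor `2^t` of the
exponent is absorbed by the substitution `z ↦ z^(2^t)`.
-/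

open Finset

abbrev signChar : AddChar (ZMod 2) ℤ := AddChar.zmodChar 2 (ζ := -1) (by norm_num)

lemma signChar_eq_one_iff {x : ZMod 2} : signChar x = 1 ↔ x = 0 := by
  rw [AddChar.zmodChar_apply]
  revert x; decide

lemma signChar_of_ne_zero {x : ZMod 2} (hx : x ≠ 0) : signChar x = -1 := by
  rw [AddChar.zmodChar_apply]
  revert x; decide

lemma signChar_le_one (x : ZMod 2) : signChar x ≤ 1 := by
  rw [AddChar.zmodChar_apply]
  revert x; decide

section QuadraticSign

variable {V : Type*} [AddCommGroup V] [Fintype V]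

lemma sq_sum_signChar_eq_card_mul_sum_radical (q : V → ZMod 2) (β : V → V →+ ZMod 2)
    (hq : ∀ z w, q (z + w) = q z + q w + β w z) [DecidablePred fun w => β w = 0] :
    (∑ z, signChar (q z)) ^ 2 = Fintype.card V * ∑ w with β w = 0, signChar (q w) := by
  have hdiff (z w : V) : signChar (q z) * signChar (q (z + w))
      = signChar (q w) * (signChar.compAddMonoidHom (β w)) z := by
    rw [AddChar.compAddMonoidHom_apply, ← AddChar.map_add_eq_mul, ← AddChar.map_add_eq_mul, hq]
    congr 1
    linear_combination CharTwo.add_self_eq_zero (q z)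
  have htriv (w : V) : signChar.compAddMonoidHom (β w) = 0 ↔ β w = 0 := by
    refine ⟨fun h => AddMonoidHom.ext fun z => ?_, fun h => by ext z; simp [h]⟩
    exact signChar_eq_one_iff.mp (DFunLike.congr_fun h z)
  calc (∑ z, signChar (q z)) ^ 2
      = ∑ z, ∑ w, signChar (q z) * signChar (q (z + w)) := by
        rw [sq, sum_mul_sum]
        exact sum_congr rfl fun z _ =>
          (Fintype.sum_equiv (Equiv.addLeft z) _ _ fun w => rfl).symm
    _ = ∑ w, ∑ z, signChar (q z) * signChar (q (z + w)) := sum_comm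
    _ = ∑ w, signChar (q w) * ∑ z, (signChar.compAddMonoidHom (β w)) z := by
        simp_rw [hdiff, ← mul_sum]
    _ = Fintype.card V * ∑ w with β w = 0, signChar (q w) := by
        simp_rw [AddChar.sum_eq_ite, htriv, mul_ite, mul_zero, ← sum_filter, mul_sum, mul_comm]

lemma sq_sum_signChar_le_card_mul_card_radical (q : V → ZMod 2) (β : V → V →+ ZMod 2)
    (hq : ∀ z w, q (z + w) = q z + q w + β w z) [DecidablePred fun w => β w = 0] :
    (∑ z, signChar (q z)) ^ 2 ≤ Fintype.card V * #{w | β w = 0} := by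
  rw [sq_sum_signChar_eq_card_mul_sum_radical q β hq]
  gcongr
  simpa using sum_le_card_nsmul _ _ 1 fun w _ => signChar_le_one (q w)

end QuadraticSign

section GaloisField

variable {k : ℕ}

local notation "F" => GaloisField 2 k
local notation "Tr" => Algebra.trace (ZMod 2) (GaloisField 2 k)

lemma absTrace_eq_algebraMap_trace (hk : k ≠ 0) (x : F) :
    absTrace k x = algebraMap (ZMod 2) F (Tr x) := by
  rw [FiniteField.algebraMap_trace_eq_sum_pow, GaloisField.finrank 2 hk, Nat.card_zmod]
  rfl

lemma trace_pow_two_pow (x : F) (j : ℕ) : Tr (x ^ 2 ^ j) = Tr x := by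
  induction j with
  | zero => simp
  | succ j ih =>
    rw [← ih, pow_succ, pow_mul, ← Algebra.trace_eq_of_algEquiv
      (FiniteField.frobeniusAlgEquivOfAlgebraic (ZMod 2) F) (x ^ 2 ^ j),
      FiniteField.coe_frobeniusAlgEquivOfAlgebraic, ZMod.card]

lemma trace_one (hk : Odd k) : Tr (1 : F) = 1 := by
  rw [← map_one (algebraMap (ZMod 2) F), Algebra.trace_algebraMap,
    GaloisField.finrank 2 hk.pos.ne', nsmul_one, ZMod.natCast_eq_one_iff_odd]
  exact hk

lemma eq_zero_of_forall_trace_mul_eq_zero (hk : Odd k) {r : F} (h : ∀ y, Tr (y * r) = 0) :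
    r = 0 := by
  by_contra hr
  simpa [inv_mul_cancel₀ hr, trace_one hk] using h r⁻¹

lemma pow_two_pow_eq_self (hk : k ≠ 0) (x : F) : x ^ 2 ^ k = x := by
  rw [← GaloisField.card 2 k hk, Nat.card_eq_fintype_card]
  exact FiniteField.pow_card x

lemma eq_zero_or_one_of_pow_two_pow_eq_self_s14 (hk : k ≠ 0) {m : ℕ} (hm : Nat.Coprime m k)
    {x : F} (h : x ^ 2 ^ m = x) : x = 0 ∨ x = 1 := by
  have hper (n : ℕ) : Function.IsPeriodicPt (· ^ 2) n x ↔ x ^ 2 ^ n = x := by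
    rw [Function.IsPeriodicPt, Function.IsFixedPt, pow_iterate]
  have hgcd := ((hper m).2 h).gcd ((hper k).2 (pow_two_pow_eq_self hk x))
  rw [hm.gcd_eq_one, hper, pow_one] at hgcd
  exact IsIdempotentElem.iff_eq_zero_or_one.mp ((sq x).symm.trans hgcd)

lemma sq_add_mul_add_sq_ne_zero (hk : Odd k) {c d : F} (hcd : (c, d) ≠ 0) :
    c ^ 2 + c * d + d ^ 2 ≠ 0 := by
  intro h
  by_cases hd : d = 0
  · subst hd
    exact hcd (by simpa using h)
  · -- a root of `X² + X + 1` is fixed by `x ↦ x⁴`, hence lies in `𝔽₂`, where it has no root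
    have hr : (c / d) ^ 2 + c / d + 1 = 0 := by
      field_simp
      linear_combination h
    have hr4 : (c / d) ^ 2 ^ 2 = c / d := by
      linear_combination ((c / d) ^ 2 - c / d) * hr
    have hcop : Nat.Coprime 2 k := Nat.coprime_two_left.mpr hk
    rcases eq_zero_or_one_of_pow_two_pow_eq_self_s14 hk.pos.ne' hcop hr4 with h0 | h1
    · simp [h0] at hr
    · rw [h1] at hr
      exact one_ne_zero (by linear_combination hr - CharTwo.two_eq_zero (R := F))

end GaloisField

section TwistedLinear

open Matrix

variable {K : Type*} [Field K] (φ : K →+* K) (A B : Matrix (Fin 2) (Fin 2) K)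

def TwistedEq (w : K × K) : Prop := A *ᵥ ![φ w.1, φ w.2] = B *ᵥ ![w.1, w.2]

variable {φ A B}

lemma twistedEq_iff {w : K × K} : TwistedEq φ A B w ↔
    A 0 0 * φ w.1 + A 0 1 * φ w.2 = B 0 0 * w.1 + B 0 1 * w.2 ∧
    A 1 0 * φ w.1 + A 1 1 * φ w.2 = B 1 0 * w.1 + B 1 1 * w.2 := by
  simp [TwistedEq, funext_iff, Fin.forall_fin_two]

lemma TwistedEq.det_mul_map_det {w w' : K × K} (hw : TwistedEq φ A B w)
    (hw' : TwistedEq φ A B w') :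
    A.det * φ (w.1 * w'.2 - w.2 * w'.1) = B.det * (w.1 * w'.2 - w.2 * w'.1) := by
  obtain ⟨h₁, h₂⟩ := twistedEq_iff.mp hw
  obtain ⟨h₁', h₂'⟩ := twistedEq_iff.mp hw'
  rw [Matrix.det_fin_two, Matrix.det_fin_two, map_sub, map_mul, map_mul]
  linear_combination (A 1 0 * φ w'.1 + A 1 1 * φ w'.2) * h₁ + (B 0 0 * w.1 + B 0 1 * w.2) * h₂'
    - (A 0 0 * φ w'.1 + A 0 1 * φ w'.2) * h₂ - (B 1 0 * w.1 + B 1 1 * w.2) * h₁'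

lemma map_div_eq_div_of_det_mul_map_eq (hA : A.det ≠ 0) {x y : K}
    (hx : A.det * φ x = B.det * x) (hy : A.det * φ y = B.det * y) : φ (x / y) = x / y := by
  rcases eq_or_ne y 0 with rfl | hy0
  · simp
  rw [map_div₀, div_eq_div_iff ((map_ne_zero φ).mpr hy0) hy0]
  exact mul_left_cancel₀ hA (by linear_combination y * hx - x * hy)

lemma TwistedEq.mem_of_det_ne_zero (hφ : ∀ x, φ x = x → x = 0 ∨ x = 1) (hA : A.det ≠ 0)
    {w₁ w₂ w : K × K} (hw₁ : TwistedEq φ A B w₁) (hw₂ : TwistedEq φ A B w₂) (hw : TwistedEq φ A B w)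
    (h₁₂ : w₁.1 * w₂.2 - w₁.2 * w₂.1 ≠ 0) :
    w ∈ ({0, w₁, w₂, w₁ + w₂} : Set (K × K)) := by
  have hα := map_div_eq_div_of_det_mul_map_eq hA (hw.det_mul_map_det hw₂) (hw₁.det_mul_map_det hw₂)
  have hβ := map_div_eq_div_of_det_mul_map_eq hA (hw₁.det_mul_map_det hw) (hw₁.det_mul_map_det hw₂)
  have hcramer : w = ((w.1 * w₂.2 - w.2 * w₂.1) / (w₁.1 * w₂.2 - w₁.2 * w₂.1)) • w₁
      + ((w₁.1 * w.2 - w₁.2 * w.1) / (w₁.1 * w₂.2 - w₁.2 * w₂.1)) • w₂ := by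
    ext <;> simp only [Prod.fst_add, Prod.snd_add, Prod.smul_fst, Prod.smul_snd, smul_eq_mul] <;>
      rw [div_mul_eq_mul_div, div_mul_eq_mul_div, ← add_div, eq_div_iff h₁₂] <;> ring
  rcases hφ _ hα with h | h <;> rcases hφ _ hβ with h' | h' <;> rw [h, h'] at hcramer <;>
    simp [hcramer]

lemma TwistedEq.mem_of_det_eq_zero (hφ : ∀ x, φ x = x → x = 0 ∨ x = 1) (hB : B.det ≠ 0)
    {w₁ w : K × K} (hw₁ : TwistedEq φ A B w₁) (hw : TwistedEq φ A B w) (hw₁0 : w₁ ≠ 0)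
    (h : w₁.1 * w.2 - w₁.2 * w.1 = 0) :
    w ∈ ({0, w₁} : Set (K × K)) := by
  obtain ⟨c, rfl⟩ : ∃ c : K, w = c • w₁ := by
    rcases ne_or_eq w₁.1 0 with h1 | h1
    · refine ⟨w.1 / w₁.1, Prod.ext (by simp [h1]) ?_⟩
      simp only [Prod.smul_snd, smul_eq_mul]
      field_simp
      linear_combination h
    · have h2 : w₁.2 ≠ 0 := fun h2 => hw₁0 (Prod.ext h1 h2)
      exact ⟨w.2 / w₁.2, Prod.ext (by simpa [h1, h2] using h) (by simp [h2])⟩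
  have hc : (φ c - c) • (B *ᵥ ![w₁.1, w₁.2]) = 0 := by
    have e₁ : ![φ (c • w₁).1, φ (c • w₁).2] = φ c • ![φ w₁.1, φ w₁.2] := by
      ext i; fin_cases i <;> simp
    have e₂ : ![(c • w₁).1, (c • w₁).2] = c • ![w₁.1, w₁.2] := by
      ext i; fin_cases i <;> simp
    rw [TwistedEq, e₁, e₂, mulVec_smul, mulVec_smul, hw₁] at hw
    rw [sub_smul, hw, sub_self]
  rcases smul_eq_zero.mp hc with hc | hc
  · rcases hφ c (sub_eq_zero.mp hc) with rfl | rfl <;> simp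
  · have := eq_zero_of_mulVec_eq_zero hB hc
    exact absurd (Prod.ext (by simpa using congrFun this 0) (by simpa using congrFun this 1)) hw₁0

lemma card_le_four_of_twistedEq [DecidableEq K] (hφ : ∀ x, φ x = x → x = 0 ∨ x = 1)
    (hA : A.det ≠ 0) (hB : B.det ≠ 0) {S : Finset (K × K)} (hS : ∀ w ∈ S, TwistedEq φ A B w) :
    #S ≤ 4 := by
  by_cases hplane : ∃ w₁ ∈ S, ∃ w₂ ∈ S, w₁.1 * w₂.2 - w₁.2 * w₂.1 ≠ 0
  · obtain ⟨w₁, h₁, w₂, h₂, h₁₂⟩ := hplane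
    calc #S ≤ #{0, w₁, w₂, w₁ + w₂} := card_le_card fun w hw => by
          simpa using (hS w₁ h₁).mem_of_det_ne_zero hφ hA (hS w₂ h₂) (hS w hw) h₁₂
      _ ≤ 4 := card_le_four
  push Not at hplane
  by_cases hzero : ∀ w ∈ S, w = 0
  · calc #S ≤ #{(0 : K × K)} := card_le_card fun w hw => by simp [hzero w hw]
      _ ≤ 4 := by simp
  push Not at hzero
  obtain ⟨w₁, h₁, hw₁0⟩ := hzero
  calc #S ≤ #{0, w₁} := card_le_card fun w hw => by
        simpa using (hS w₁ h₁).mem_of_det_eq_zero hφ hB (hS w hw) hw₁0 (hplane w₁ h₁ w hw)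
    _ ≤ 4 := card_le_two.trans (by norm_num)

end TwistedLinear

section Polarization

variable {R : Type*} [CommRing R] [CharP R 2]

def frobPolar (i : ℕ) (x y : R) : R := x ^ 2 ^ i * y + x * y ^ 2 ^ i

lemma add_pow_two_pow_add_one (i : ℕ) (x y : R) :
    (x + y) ^ (2 ^ i + 1) = x ^ (2 ^ i + 1) + y ^ (2 ^ i + 1) + frobPolar i x y := by
  rw [pow_succ, pow_succ, pow_succ, add_pow_char_pow, frobPolar]
  ring

lemma frobPolar_add_left (i : ℕ) (x x' y : R) :
    frobPolar i (x + x') y = frobPolar i x y + frobPolar i x' y := by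
  rw [frobPolar, frobPolar, frobPolar, add_pow_char_pow]
  ring

end Polarization

section Butterfly

open Matrix

variable {k : ℕ}

local notation "F" => GaloisField 2 k
local notation "Tr" => Algebra.trace (ZMod 2) (GaloisField 2 k)

noncomputable def butterflyPhase (e : ℕ) (a b c d : F) (z : F × F) : F :=
  c * ((z.1 + z.2) ^ e + z.1 ^ e) + d * ((z.1 + z.2) ^ e + z.2 ^ e) + a * z.1 + b * z.2

lemma butterflyWalshOne_eq_sum_signChar (hk : k ≠ 0) (e : ℕ) (a b c d : F) :
    butterflyWalshOne k e a b c d = ∑ z : F × F, signChar (Tr (butterflyPhase e a b c d z)) := by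
  rw [butterflyWalshOne, Fintype.sum_prod_type]
  refine sum_congr rfl fun x _ => sum_congr rfl fun y _ => ?_
  simp only [absTrace_eq_algebraMap_trace hk, map_eq_zero_iff _ (algebraMap (ZMod 2) F).injective]
  split_ifs with h
  · rw [butterflyPhase, h, AddChar.map_zero_eq_one]
  · rw [butterflyPhase, signChar_of_ne_zero h]

lemma butterflyWalshOne_mul_two_pow (hk : k ≠ 0) (e t : ℕ) (a b c d : F) :
    butterflyWalshOne k (e * 2 ^ t) a b c d
      = butterflyWalshOne k e (a ^ 2 ^ t) (b ^ 2 ^ t) c d := by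
  set ρ := iterateFrobenius F 2 t
  have hρ : Function.Bijective ρ := Finite.injective_iff_bijective.mp ρ.injective
  have htrace (z : F × F) : Tr (butterflyPhase (e * 2 ^ t) a b c d z)
      = Tr (butterflyPhase e (a ^ 2 ^ t) (b ^ 2 ^ t) c d (ρ z.1, ρ z.2)) := by
    simp only [butterflyPhase, ρ, iterateFrobenius_def, ← add_pow_char_pow, ← pow_mul, mul_comm e,
      ← mul_pow, map_add, trace_pow_two_pow]
  rw [butterflyWalshOne_eq_sum_signChar hk, butterflyWalshOne_eq_sum_signChar hk]
  simp_rw [htrace]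
  exact Fintype.sum_bijective _ (hρ.prodMap hρ) _ _ fun _ => rfl

noncomputable def butterflyBilin (i : ℕ) (c d : F) (w z : F × F) : F :=
  c * (frobPolar i (z.1 + z.2) (w.1 + w.2) + frobPolar i z.1 w.1)
    + d * (frobPolar i (z.1 + z.2) (w.1 + w.2) + frobPolar i z.2 w.2)

lemma butterflyPhase_add (i : ℕ) (a b c d : F) (z w : F × F) :
    butterflyPhase (2 ^ i + 1) a b c d (z + w)
      = butterflyPhase (2 ^ i + 1) a b c d z + butterflyPhase (2 ^ i + 1) a b c d w
        + butterflyBilin i c d w z := by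
  simp only [butterflyPhase, butterflyBilin, Prod.fst_add, Prod.snd_add,
    add_add_add_comm z.1 w.1 z.2 w.2, add_pow_two_pow_add_one]
  ring

noncomputable def butterflyPolar (i : ℕ) (c d : F) (w : F × F) : F × F →+ ZMod 2 :=
  (Algebra.trace (ZMod 2) F).toAddMonoidHom.comp <| AddMonoidHom.mk' (butterflyBilin i c d w)
    fun z z' => by
      simp only [butterflyBilin, Prod.fst_add, Prod.snd_add, add_add_add_comm z.1 z'.1,
        frobPolar_add_left]
      ring

/-- In characteristic `2`, `c ((x+y)^(σ+1) + x^(σ+1)) + d ((x+y)^(σ+1) + y^(σ+1)) = (z^σ)ᵀ N z`. -/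
noncomputable def butterflyMatrix (c d : F) : Matrix (Fin 2) (Fin 2) F := !![d, c + d; c + d, c]

lemma det_butterflyMatrix (c d : F) : (butterflyMatrix c d).det = -(c ^ 2 + c * d + d ^ 2) := by
  rw [butterflyMatrix, det_fin_two_of]
  ring

lemma trace_mul_frobPolar (i : ℕ) (γ x y : F) :
    Tr (γ * frobPolar i x y) = Tr (x ^ 2 ^ i * (γ * y + γ ^ 2 ^ i * y ^ 2 ^ (2 * i))) := by
  rw [frobPolar, mul_add, map_add, ← trace_pow_two_pow (γ * (x * y ^ 2 ^ i)) i, mul_add, map_add]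
  congr 1
  · ring_nf
  · rw [mul_pow, mul_pow, ← pow_mul, ← pow_add, two_mul]
    ring_nf

noncomputable def butterflyResidual (i : ℕ) (c d : F) (w : F × F) : Fin 2 → F :=
  butterflyMatrix c d *ᵥ ![w.1, w.2] - (butterflyMatrix c d).map (iterateFrobenius F 2 i) *ᵥ
    ![iterateFrobenius F 2 (2 * i) w.1, iterateFrobenius F 2 (2 * i) w.2]

lemma trace_butterflyBilin (i : ℕ) (c d : F) (w z : F × F) :
    Tr (butterflyBilin i c d w z) = Tr (z.1 ^ 2 ^ i * butterflyResidual i c d w 0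
      + z.2 ^ 2 ^ i * butterflyResidual i c d w 1) := by
  have hsplit : butterflyBilin i c d w z = (c + d) * frobPolar i (z.1 + z.2) (w.1 + w.2)
      + c * frobPolar i z.1 w.1 + d * frobPolar i z.2 w.2 := by
    rw [butterflyBilin]; ring
  rw [hsplit, map_add, map_add, trace_mul_frobPolar, trace_mul_frobPolar, trace_mul_frobPolar,
    ← map_add, ← map_add]
  congr 1
  simp only [add_pow_char_pow, butterflyResidual, butterflyMatrix, mulVec_cons, mulVec_empty,
    add_zero, iterateFrobenius_def, mulVec_fin_two, Fin.isValue, map_apply, of_apply, cons_val',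
    cons_val_zero, cons_val_fin_one, cons_val_one, Pi.sub_apply, Pi.add_apply, Pi.smul_apply,
    Function.comp_apply, head_cons, smul_eq_mul, tail_cons]
  linear_combination (z.1 ^ 2 ^ i * (c * w.1 + (c ^ 2 ^ i + d ^ 2 ^ i)
      * (w.1 ^ 2 ^ (2 * i) + w.2 ^ 2 ^ (2 * i))) + z.2 ^ 2 ^ i * (d * w.2 + (c ^ 2 ^ i + d ^ 2 ^ i)
      * (w.1 ^ 2 ^ (2 * i) + w.2 ^ 2 ^ (2 * i)))) * CharTwo.two_eq_zero (R := F)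

lemma butterflyPolar_eq_zero_iff (hk : Odd k) (i : ℕ) (c d : F) (w : F × F) :
    butterflyPolar i c d w = 0 ↔ TwistedEq (iterateFrobenius F 2 (2 * i))
      ((butterflyMatrix c d).map (iterateFrobenius F 2 i)) (butterflyMatrix c d) w := by
  have hβ (z : F × F) : butterflyPolar i c d w z = Tr (z.1 ^ 2 ^ i * butterflyResidual i c d w 0
      + z.2 ^ 2 ^ i * butterflyResidual i c d w 1) :=
    trace_butterflyBilin i c d w z
  have hσ := Finite.injective_iff_surjective.mp (iterateFrobenius F 2 i).injective
  have hres : TwistedEq (iterateFrobenius F 2 (2 * i))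
      ((butterflyMatrix c d).map (iterateFrobenius F 2 i)) (butterflyMatrix c d) w ↔
      butterflyResidual i c d w = 0 := by
    rw [TwistedEq, butterflyResidual, sub_eq_zero, eq_comm]
  rw [hres]
  constructor
  · intro h
    ext j
    refine eq_zero_of_forall_trace_mul_eq_zero hk fun y => ?_
    obtain ⟨x, rfl⟩ := hσ y
    fin_cases j
    · simpa [hβ, iterateFrobenius_def] using DFunLike.congr_fun h (x, 0)
    · simpa [hβ, iterateFrobenius_def] using DFunLike.congr_fun h (0, x)
  · intro h
    ext z
    simp [hβ, h]

lemma card_galoisField_prod (hk : k ≠ 0) : Fintype.card (F × F) = 2 ^ (2 * k) := by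
  rw [Fintype.card_prod, ← Nat.card_eq_fintype_card, GaloisField.card 2 k hk, ← pow_add, two_mul]

lemma trace_butterflyPhase_add (i : ℕ) (a b c d : F) (z w : F × F) :
    Tr (butterflyPhase (2 ^ i + 1) a b c d (z + w)) = Tr (butterflyPhase (2 ^ i + 1) a b c d z)
      + Tr (butterflyPhase (2 ^ i + 1) a b c d w) + butterflyPolar i c d w z := by
  rw [butterflyPhase_add, map_add, map_add]
  rfl

lemma abs_butterflyWalshOne_le (hk : Odd k) {i : ℕ} (hi : Nat.Coprime (2 * i) k) (a b : F)
    {c d : F} (hcd : (c, d) ≠ 0) : |butterflyWalshOne k (2 ^ i + 1) a b c d| ≤ 2 ^ (k + 1) := by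
  classical
  have hk0 : k ≠ 0 := hk.pos.ne'
  have hdet : (butterflyMatrix c d).det ≠ 0 := by
    rw [det_butterflyMatrix]
    exact neg_ne_zero.mpr (sq_add_mul_add_sq_ne_zero hk hcd)
  have hrad : #{w | butterflyPolar i c d w = 0} ≤ 4 := by
    refine card_le_four_of_twistedEq (fun x hx => eq_zero_or_one_of_pow_two_pow_eq_self_s14 hk0 hi hx)
      ?_ hdet fun w hw => (butterflyPolar_eq_zero_iff hk i c d w).mp (mem_filter.mp hw).2
    rw [← RingHom.mapMatrix_apply, ← RingHom.map_det]
    exact (map_ne_zero _).mpr hdet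
  refine abs_le_of_sq_le_sq ?_ (by positivity)
  calc butterflyWalshOne k (2 ^ i + 1) a b c d ^ 2
      ≤ Fintype.card (F × F) * #{w | butterflyPolar i c d w = 0} := by
        rw [butterflyWalshOne_eq_sum_signChar hk0]
        exact sq_sum_signChar_le_card_mul_card_radical _ _ (trace_butterflyPhase_add i a b c d)
    _ ≤ 2 ^ (2 * k) * 4 := by
        rw [card_galoisField_prod hk0, Nat.cast_pow, Nat.cast_ofNat]
        gcongr
        exact_mod_cast hrad
    _ = (2 ^ (k + 1)) ^ 2 := by ring

lemma butterflyPolar_one_one_eq_zero_iff (hk : Odd k) {i : ℕ} (hi : Nat.Coprime (2 * i) k)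
    (w : F × F) : butterflyPolar i 1 1 w = 0 ↔ w.1 ∈ ({0, 1} : Set F) ∧ w.2 ∈ ({0, 1} : Set F) := by
  have hfix (x : F) : x ^ 2 ^ (2 * i) = x ↔ x ∈ ({0, 1} : Set F) := by
    refine ⟨eq_zero_or_one_of_pow_two_pow_eq_self_s14 hk.pos.ne' hi, ?_⟩
    rintro (rfl | rfl) <;> simp
  have hN : butterflyMatrix (1 : F) 1 = 1 := by
    rw [butterflyMatrix, CharTwo.add_self_eq_zero, one_fin_two]
  rw [butterflyPolar_eq_zero_iff hk, hN, Matrix.map_one _ (map_zero _) (map_one _), twistedEq_iff]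
  simp [iterateFrobenius_def, hfix]

lemma butterflyWalshOne_one_one_one_one_sq (hk : Odd k) {i : ℕ} (hi : Nat.Coprime (2 * i) k) :
    butterflyWalshOne k (2 ^ i + 1) 1 1 1 1 ^ 2 = (2 ^ (k + 1)) ^ 2 := by
  classical
  have hk0 : k ≠ 0 := hk.pos.ne'
  have hrad : ({w | butterflyPolar i (1 : F) 1 w = 0} : Finset (F × F))
      = ({0, 1} : Finset F) ×ˢ {0, 1} := by
    ext w
    simp [butterflyPolar_one_one_eq_zero_iff hk hi]
  rw [butterflyWalshOne_eq_sum_signChar hk0,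
    sq_sum_signChar_eq_card_mul_sum_radical _ _ (trace_butterflyPhase_add i 1 1 1 1), hrad,
    card_galoisField_prod hk0, sum_product, sum_pair zero_ne_one, sum_pair zero_ne_one,
    sum_pair zero_ne_one]
  simp [butterflyPhase, CharTwo.add_self_eq_zero]
  ring

end Butterfly

theorem closedButterfly_trivial_coeff_nonlinearity_general (k i t : ℕ) (hk : Odd k)
    (hgcd : Nat.gcd i k = 1) :
    IsGreatest {m : ℤ | ∃ a b c d : GaloisField 2 k, (c, d) ≠ (0, 0) ∧
        m = |butterflyWalshOne k ((2 ^ i + 1) * 2 ^ t) a b c d|} (2 ^ (k + 1)) ∧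
    (2 : ℤ) ^ (2 * k - 1) - (2 ^ (k + 1)) / 2 = 2 ^ (2 * k - 1) - 2 ^ k := by
  have hk0 : k ≠ 0 := hk.pos.ne'
  have hi : Nat.Coprime (2 * i) k := Nat.Coprime.mul_left (Nat.coprime_two_left.mpr hk) hgcd
  refine ⟨⟨⟨1, 1, 1, 1, by simp, ?_⟩, ?_⟩, by rw [pow_succ, Int.mul_ediv_cancel _ two_ne_zero]⟩
  · rw [butterflyWalshOne_mul_two_pow hk0, one_pow, eq_comm,
      ← abs_of_pos (by positivity : (0 : ℤ) < 2 ^ (k + 1)), ← sq_eq_sq_iff_abs_eq_abs]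
    exact butterflyWalshOne_one_one_one_one_sq hk hi
  · rintro m ⟨a, b, c, d, hcd, rfl⟩
    rw [butterflyWalshOne_mul_two_pow hk0]
    exact abs_butterflyWalshOne_le hk hi _ _ hcd

/-- For `k ≥ 3` odd, `gcd(i,k) = 1` and exponent `e = (2^i+1)·2^t`, the maximum of
`|W((a,b),(c,d))|` over all `a, b` and `(c,d) ≠ (0,0)` for the closed butterfly with
trivial coefficient `α = 1` equals `2^(k+1)`; equivalently its nonlinearity is
`2^(2k-1) - 2^k`. -/
theorem closedButterfly_trivial_coeff_nonlinearity (k i t : ℕ) (hk : Odd k) (hk3 : 3 ≤ k)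
    (hipos : 0 < i) (hgcd : Nat.gcd i k = 1) (ht : t ≤ k - 1) :
    IsGreatest {m : ℤ | ∃ a b c d : GaloisField 2 k, (c, d) ≠ (0, 0) ∧
        m = |butterflyWalshOne k ((2 ^ i + 1) * 2 ^ t) a b c d|} (2 ^ (k + 1)) ∧
    (2 : ℤ) ^ (2 * k - 1) - (2 ^ (k + 1)) / 2 = 2 ^ (2 * k - 1) - 2 ^ k :=
  closedButterfly_trivial_coeff_nonlinearity_general k i t hk hgcd
end

section
/- Let k be an odd positive integer, i a positive integer with gcd(i,k) = 1, F = GaloisField 2 k, and α ∈ F with α ≠ 0 and α ≠ 1. For c, d ∈ F define: B4 = (α^(2^i+1)·c + c + d)·(α^(2^i)·c + α·d)^(2^i) + (α^(2^i+1)·c + c + d)^(2^i)·(α·c + α^(2^i)·d); B5 = (α·c + α^(2^i)·d)^(2^i)·(α^(2^i)·c + α·d)^(2^i) + (α^(2^i+1)·c + c + d)^(2^i)·(α^(2^i+1)·d + c + d)^(2^i); B6 = (α^(2^i)·c + α·d)·(α^(2^i)·c + α·d)^(2^i) + (α^(2^i+1)·c + c + d)^(2^i)·(α^(2^i+1)·d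 + c + d); B7 = (α^(2^i)·c + α·d)^(2^i)·B6^(2^(2i)) + (α^(2^i+1)·d + c + d)^(2^i)·B4^(2^(2i)). If α^(2^i+1)·c + c + d ≠ 0, α^(2^i)·c + α·d ≠ 0, B4 ≠ 0, B5 = 0 and B6 ≠ 0, then B7 ≠ 0. -/
/-- Appendix claim: with `B4, B5, B6, B7` as in the proof of Lemma 3.6, if
`α^(2^i+1)·c + c + d ≠ 0`, `α^(2^i)·c + α·d ≠ 0`, `B4 ≠ 0`, `B5 = 0` and `B6 ≠ 0`,
then `B7 ≠ 0`. -/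
theorem butterfly_appendix_B7_ne_zero (k i : ℕ) (hk : Odd k) (hkpos : 0 < k)
    (hipos : 0 < i) (hgcd : Nat.gcd i k = 1)
    (α : GaloisField 2 k) (hα0 : α ≠ 0) (hα1 : α ≠ 1) (c d : GaloisField 2 k)
    (B4 B5 B6 B7 : GaloisField 2 k)
    (hB4 : B4 = (α ^ (2 ^ i + 1) * c + c + d) * (α ^ 2 ^ i * c + α * d) ^ 2 ^ i
        + (α ^ (2 ^ i + 1) * c + c + d) ^ 2 ^ i * (α * c + α ^ 2 ^ i * d))
    (hB5 : B5 = (α * c + α ^ 2 ^ i * d) ^ 2 ^ i * (α ^ 2 ^ i * c + α * d) ^ 2 ^ i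
        + (α ^ (2 ^ i + 1) * c + c + d) ^ 2 ^ i * (α ^ (2 ^ i + 1) * d + c + d) ^ 2 ^ i)
    (hB6 : B6 = (α ^ 2 ^ i * c + α * d) * (α ^ 2 ^ i * c + α * d) ^ 2 ^ i
        + (α ^ (2 ^ i + 1) * c + c + d) ^ 2 ^ i * (α ^ (2 ^ i + 1) * d + c + d))
    (hB7 : B7 = (α ^ 2 ^ i * c + α * d) ^ 2 ^ i * B6 ^ 2 ^ (2 * i)
        + (α ^ (2 ^ i + 1) * d + c + d) ^ 2 ^ i * B4 ^ 2 ^ (2 * i))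
    (h1 : α ^ (2 ^ i + 1) * c + c + d ≠ 0) (h2 : α ^ 2 ^ i * c + α * d ≠ 0)
    (h3 : B4 ≠ 0) (h4 : B5 = 0) (h5 : B6 ≠ 0) : B7 ≠ 0 := by
  set A := α ^ (2 ^ i + 1) * c + c + d with hA
  set B := α ^ 2 ^ i * c + α * d with hB
  set C := α * c + α ^ 2 ^ i * d with hC
  set D := α ^ (2 ^ i + 1) * d + c + d with hD
  set q : ℕ := 2 ^ i with hqdef
  have hq0 : q ≠ 0 := by positivity
  have frob : ∀ x y : GaloisField 2 k, (x + y) ^ q = x ^ q + y ^ q := fun x y =>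
    add_pow_char_pow x y 2 i
  -- B5 = (C*B + A*D)^q
  have hB5' : B5 = (C * B + A * D) ^ q := by
    rw [hB5, frob (C * B) (A * D), mul_pow C B q, mul_pow A D q]
  have r1 : A * D = C * B := by
    have h0 : (C * B + A * D) ^ q = 0 := by rw [← hB5', h4]
    have h0' : C * B + A * D = 0 := by
      exact pow_eq_zero_iff hq0 |>.mp h0
    have h3' : A * D = -(C * B) := eq_neg_of_add_eq_zero_right h0'
    rwa [CharTwo.neg_eq] at h3'
  have r2 : A ^ q * D ^ q = C ^ q * B ^ q := by
    rw [← mul_pow, ← mul_pow, r1]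
  -- expand Frobenius of B4 and B6
  have hB4' : B4 = A * B ^ q + A ^ q * C := hB4
  have hB6' : B6 = B * B ^ q + A ^ q * D := hB6
  have hB4q : B4 ^ q = A ^ q * (B ^ q) ^ q + (A ^ q) ^ q * C ^ q := by
    rw [hB4', frob (A * B ^ q) (A ^ q * C), mul_pow A (B ^ q) q, mul_pow (A ^ q) C q]
  have hB6q : B6 ^ q = B ^ q * (B ^ q) ^ q + (A ^ q) ^ q * D ^ q := by
    rw [hB6', frob (B * B ^ q) (A ^ q * D), mul_pow B (B ^ q) q, mul_pow (A ^ q) D q]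
  -- the key identity
  set E := B * B6 ^ q + D * B4 ^ q with hE
  have key : A ^ q * A * E = B * B4 * B4 ^ q := by
    rw [hE, hB4q, hB6q, hB4']
    linear_combination ((A ^ q) ^ q * A * B) * r2 +
      (A ^ q * A ^ q * (B ^ q) ^ q + (A ^ q) ^ q * A ^ q * C ^ q) * r1
  have hEne : E ≠ 0 := by
    intro hE0
    have : B * B4 * B4 ^ q = 0 := by rw [← key, hE0, mul_zero]
    rcases mul_eq_zero.mp this with h | h
    · rcases mul_eq_zero.mp h with h | h
      · exact h2 h
      · exact h3 h
    · exact h3 (pow_eq_zero_iff hq0 |>.mp h)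
  -- B7 = E ^ q
  have hqq : (2 : ℕ) ^ (2 * i) = q * q := by
    rw [two_mul, pow_add]
  have hB7' : B7 = E ^ q := by
    rw [hB7, hE, frob (B * B6 ^ q) (D * B4 ^ q), mul_pow B (B6 ^ q) q,
      mul_pow D (B4 ^ q) q, hqq, pow_mul B6 q q, pow_mul B4 q q]
  rw [hB7']
  exact pow_ne_zero _ hEne
end

section
/- Let k be a positive integer, i a positive integer with 1 ≤ i < k, and F = GaloisField 2 k. Fix (c,d) ∈ F × F with (c,d) ≠ (0,0). If (x,y) ∈ F × F satisfies the system: (1) d^(2^i)·x + (d·x)^(2^(k−i)) + (c+d)^(2^i)·y + ((c+d)·y)^(2^(k−i)) = 0 and (2) c^(2^i)·x + (c·x)^(2^(k−i)) + d^(2^i)·y + (d·y)^(2^(k−i)) = 0, then the pairs (y, x+y) and (x+y, x) also satisfy the same system. -/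
/-- Section 4.2: the solution set of the linearized system from Lemma 4.3 is closed under
the map `(x,y) ↦ (y, x+y)` (hence the nonzero solutions form the orbit
`{(x,y), (y,x+y), (x+y,x)}`). -/
theorem trivial_coeff_solution_orbit (k i : ℕ) (hkpos : 0 < k)
    (hipos : 1 ≤ i) (hik : i < k)
    (c d : GaloisField 2 k) (hcd : (c, d) ≠ (0, 0)) (x y : GaloisField 2 k)
    (h1 : d ^ 2 ^ i * x + (d * x) ^ 2 ^ (k - i)
        + (c + d) ^ 2 ^ i * y + ((c + d) * y) ^ 2 ^ (k - i) = 0)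
    (h2 : c ^ 2 ^ i * x + (c * x) ^ 2 ^ (k - i)
        + d ^ 2 ^ i * y + (d * y) ^ 2 ^ (k - i) = 0) :
    (d ^ 2 ^ i * y + (d * y) ^ 2 ^ (k - i)
        + (c + d) ^ 2 ^ i * (x + y) + ((c + d) * (x + y)) ^ 2 ^ (k - i) = 0 ∧
     c ^ 2 ^ i * y + (c * y) ^ 2 ^ (k - i)
        + d ^ 2 ^ i * (x + y) + (d * (x + y)) ^ 2 ^ (k - i) = 0) ∧
    (d ^ 2 ^ i * (x + y) + (d * (x + y)) ^ 2 ^ (k - i)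
        + (c + d) ^ 2 ^ i * x + ((c + d) * x) ^ 2 ^ (k - i) = 0 ∧
     c ^ 2 ^ i * (x + y) + (c * (x + y)) ^ 2 ^ (k - i)
        + d ^ 2 ^ i * x + (d * x) ^ 2 ^ (k - i) = 0) := by
  have frob : ∀ (n : ℕ) (a b : GaloisField 2 k), (a + b) ^ 2 ^ n = a ^ 2 ^ n + b ^ 2 ^ n :=
    fun n a b => add_pow_char_pow a b 2 n
  have htwo : (2 : GaloisField 2 k) = 0 := CharTwo.two_eq_zero
  simp only [frob, mul_pow, mul_add, add_mul] at h1 h2 ⊢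
  refine ⟨⟨?_, ?_⟩, ?_, ?_⟩
  · linear_combination h1 + h2
  · linear_combination h1
  · linear_combination h2 + (d ^ 2 ^ i * x + d ^ 2 ^ (k - i) * x ^ 2 ^ (k - i)) * htwo
  · linear_combination h1 + h2 - (d ^ 2 ^ i * y + d ^ 2 ^ (k - i) * y ^ 2 ^ (k - i)) * htwo
end

section
/- Let k be an odd positive integer, i a positive integer with gcd(i,k) = 1, and F = GaloisField 2 k. If β ∈ F satisfies β^((2^i+1)^2) = (β^(2^i) + β)^(2^i+1), then β = 0. -/
theorem pow_left_injective_of_coprime_card_sub_one {M : Type*} [GroupWithZero M] {n : ℕ}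
    (hn : n ≠ 0) (h : (Nat.card M - 1).Coprime n) : Function.Injective (· ^ n : M → M) := by
  intro a b hab
  simp only at hab
  rcases eq_or_ne a 0 with rfl | ha
  · exact ((pow_eq_zero_iff hn).1 (hab.symm.trans (zero_pow hn))).symm
  have hb : b ≠ 0 := by
    rintro rfl
    exact ha ((pow_eq_zero_iff hn).1 (hab.trans (zero_pow hn)))
  have hunits : (Units.mk0 a ha) ^ n = (Units.mk0 b hb) ^ n := Units.ext (by simpa using hab)
  simpa using Nat.Coprime.pow_left_bijective (Nat.card_units M ▸ h) |>.injective hunits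

/- `2 ^ i + 1` divides `2 ^ (2 * i) - 1`, and `gcd (2 ^ k - 1, 2 ^ (2 * i) - 1) = 2 ^ gcd (k, 2 * i) - 1 = 1`. -/
theorem Nat.coprime_two_pow_sub_one_two_pow_add_one {k i : ℕ} (hk : Odd k) (hik : i.gcd k = 1) :
    (2 ^ k - 1).Coprime (2 ^ i + 1) := by
  have hdvd : 2 ^ i + 1 ∣ 2 ^ (2 * i) - 1 :=
    ⟨2 ^ i - 1, by rw [mul_comm 2 i, pow_mul, ← Nat.sq_sub_sq, one_pow]⟩
  have hcop : k.Coprime (2 * i) :=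
    Nat.Coprime.mul_right (Nat.coprime_two_right.2 hk) (Nat.coprime_comm.1 hik)
  refine Nat.Coprime.coprime_dvd_right hdvd ?_
  rw [Nat.Coprime, Nat.pow_sub_one_gcd_pow_sub_one, hcop, pow_one]

theorem add_one_pow_expChar_pow_add_one {R : Type*} [CommSemiring R] (p : ℕ) [ExpChar R p]
    (x : R) (i : ℕ) : (x + 1) ^ (p ^ i + 1) = x ^ (p ^ i + 1) + (x ^ p ^ i + x) + 1 := by
  rw [pow_succ, add_pow_expChar_pow, one_pow]
  ring

theorem butterfly_beta_eq_zero_general (k i : ℕ) (hk : Odd k)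
    (hgcd : Nat.gcd i k = 1) (β : GaloisField 2 k)
    (h : β ^ ((2 ^ i + 1) ^ 2) = (β ^ 2 ^ i + β) ^ (2 ^ i + 1)) : β = 0 := by
  have hinj : Function.Injective (· ^ (2 ^ i + 1) : GaloisField 2 k → GaloisField 2 k) := by
    refine pow_left_injective_of_coprime_card_sub_one (by positivity) ?_
    rw [GaloisField.card 2 k hk.pos.ne']
    exact Nat.coprime_two_pow_sub_one_two_pow_add_one hk hgcd
  have hfixed : β ^ (2 ^ i + 1) = β ^ 2 ^ i + β := hinj (by simpa [← pow_mul, ← sq] using h)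
  have hunit : (β + 1) ^ (2 ^ i + 1) = 1 ^ (2 ^ i + 1) := by
    rw [add_one_pow_expChar_pow_add_one 2, hfixed, CharTwo.add_self_eq_zero,
      zero_add, one_pow]
  simpa using hinj hunit

/-- From the proof of Lemma 3.1: for `k` odd and `gcd(i,k) = 1`, if
`β^((2^i+1)^2) = (β^(2^i) + β)^(2^i+1)` in `GaloisField 2 k`, then `β = 0`. -/
theorem butterfly_beta_eq_zero (k i : ℕ) (hk : Odd k) (hkpos : 0 < k)
    (hipos : 0 < i) (hgcd : Nat.gcd i k = 1) (β : GaloisField 2 k)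
    (h : β ^ ((2 ^ i + 1) ^ 2) = (β ^ 2 ^ i + β) ^ (2 ^ i + 1)) : β = 0 :=
  butterfly_beta_eq_zero_general k i hk hgcd β h
end
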